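/- arXiv:1401.3302 — 6 statements merged into one kernel-verified Lean document; each statement's English description precedes it below -/
import Mathlib

section
/- Let N ≥ 1 and let ∗ be the unique binary operation on {1, …, N} satisfying p ∗ 1 = p + 1 mod N (with representatives in {1, …, N}) and p ∗ (q ∗ 1) = (p ∗ q) ∗ (p ∗ 1) for all p, q. Then ∗ satisfies the left self-distributivity law x ∗ (y ∗ z) = (x ∗ y) ∗ (x ∗ z) for all x, y, z if and only if N is a power of 2. -/
/-- `op` is a binary operation on `{1, …, N}` (encoded as a function on `ℕ` mapping the
range `{1, …, N}` into itself) satisfying `p ∗ 1 = p + 1 mod N` (representatives in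
`{1, …, N}`) and the recursion `p ∗ (q ∗ 1) = (p ∗ q) ∗ (p ∗ 1)`. -/
def IsLaverOp (N : ℕ) (op : ℕ → ℕ → ℕ) : Prop :=
  (∀ p q, 1 ≤ p → p ≤ N → 1 ≤ q → q ≤ N → 1 ≤ op p q ∧ op p q ≤ N) ∧
  (∀ p, 1 ≤ p → p < N → op p 1 = p + 1) ∧
  op N 1 = 1 ∧
  (∀ p q, 1 ≤ p → p ≤ N → 1 ≤ q → q ≤ N → op p (op q 1) = op (op p q) (op p 1))

namespace LaverLD

variable {N : ℕ} {op : ℕ → ℕ → ℕ}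

lemma mem_range (h : IsLaverOp N op) {p q : ℕ} (hp1 : 1 ≤ p) (hpN : p ≤ N)
    (hq1 : 1 ≤ q) (hqN : q ≤ N) : 1 ≤ op p q ∧ op p q ≤ N := h.1 p q hp1 hpN hq1 hqN

lemma base1 (h : IsLaverOp N op) {p : ℕ} (hp1 : 1 ≤ p) (hpN : p < N) :
    op p 1 = p + 1 := h.2.1 p hp1 hpN

lemma rec' (h : IsLaverOp N op) {p q : ℕ} (hp1 : 1 ≤ p) (hpN : p < N)
    (hq1 : 1 ≤ q) (hqN : q < N) : op p (q + 1) = op (op p q) (p + 1) := by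
  have := h.2.2.2 p q hp1 (le_of_lt hpN) hq1 (le_of_lt hqN)
  rwa [base1 h hq1 hqN, base1 h hp1 hpN] at this

lemma rowN (h : IsLaverOp N op) (hN : 1 ≤ N) :
    ∀ q, 1 ≤ q → q ≤ N → op N q = q := by
  intro q
  induction q with
  | zero => intro h0; omega
  | succ q ih =>
    intro _ hle
    rcases Nat.eq_zero_or_pos q with rfl | hq1
    · simpa using h.2.2.1
    · have hqN : q < N := by omega
      have hax := h.2.2.2 N q hN le_rfl hq1 (le_of_lt hqN)
      rw [base1 h hq1 hqN, h.2.2.1] at hax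
      rw [hax, ih hq1 (le_of_lt hqN), base1 h hq1 hqN]

lemma lt_op (h : IsLaverOp N op) :
    ∀ d p, 1 ≤ p → p < N → N - p ≤ d → ∀ q, 1 ≤ q → q ≤ N → p < op p q := by
  intro d
  induction d with
  | zero => intro p h1 h2 h3; omega
  | succ d ih =>
    intro p hp1 hpN hd q
    induction q with
    | zero => intro h0; omega
    | succ q ihq =>
      intro _ hqN1
      rcases Nat.eq_zero_or_pos q with rfl | hq1
      · rw [base1 h hp1 hpN]; omega
      · have hqN : q < N := by omega
        have hprev := ihq hq1 (le_of_lt hqN)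
        have har := mem_range h hp1 (le_of_lt hpN) hq1 (le_of_lt hqN)
        have e : op p (q + 1) = op (op p q) (p + 1) := rec' h hp1 hpN hq1 hqN
        rcases eq_or_lt_of_le har.2 with heq | hlt
        · rw [e, heq, rowN h (by omega) (p+1) (by omega) (by omega)]; omega
        · have := ih (op p q) (by omega) hlt (by omega) (p+1) (by omega) (by omega)
          omega

lemma wrapN (h : IsLaverOp N op) (hN : 1 ≤ N) {p : ℕ} (hp1 : 1 ≤ p) (hpN : p ≤ N) :
    op p N = N := by
  rcases eq_or_lt_of_le hpN with rfl | hpN'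
  · exact rowN h hN p hp1 le_rfl
  · have hax := h.2.2.2 p N hp1 (le_of_lt hpN') hN le_rfl
    rw [h.2.2.1, base1 h hp1 hpN'] at hax
    have har := mem_range h hp1 (le_of_lt hpN') hN le_rfl
    have hgt : p < op p N := lt_op h (N - p) p hp1 hpN' le_rfl N hN le_rfl
    rcases eq_or_lt_of_le har.2 with heq | hlt
    · exact heq
    · exfalso
      have := lt_op h N (op p N) (by omega) hlt (by omega) (p+1) (by omega) (by omega)
      omega

/-- The self-distributivity law, provable from the axioms alone. -/
theorem selfDistrib (h : IsLaverOp N op) (hN : 1 ≤ N) :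
    ∀ x y z, 1 ≤ x → x ≤ N → 1 ≤ y → y ≤ N → 1 ≤ z → z ≤ N →
      op x (op y z) = op (op x y) (op x z) := by
  suffices main : ∀ dx dy x y z, 1 ≤ x → x ≤ N → 1 ≤ y → y ≤ N → 1 ≤ z → z ≤ N →
      N - x < dx → N - y < dy → op x (op y z) = op (op x y) (op x z) by
    intro x y z hx1 hxN hy1 hyN hz1 hzN
    exact main (N+1) (N+1) x y z hx1 hxN hy1 hyN hz1 hzN (by omega) (by omega)
  intro dx
  induction dx with
  | zero => intro dy x y z _ _ _ _ _ _ hdx _; omega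
  | succ dx ihx =>
    intro dy
    induction dy with
    | zero => intro x y z _ _ _ _ _ _ _ hdy; omega
    | succ dy ihy =>
      intro x y z hx1 hxN hy1 hyN hz1 hzN hdx hdy
      rcases eq_or_lt_of_le hxN with rfl | hxN'
      · have hyz := mem_range h hy1 hyN hz1 hzN
        rw [rowN h (by omega) y hy1 hyN, rowN h (by omega) z hz1 hzN,
          rowN h (by omega) (op y z) hyz.1 hyz.2]
      rcases eq_or_lt_of_le hyN with rfl | hyN'
      · have hxz := mem_range h hx1 (le_of_lt hxN') hz1 hzN
        rw [rowN h (by omega) z hz1 hzN, wrapN h (by omega) hx1 (le_of_lt hxN'),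
          rowN h (by omega) (op x z) hxz.1 hxz.2]
      have inner : ∀ z', 1 ≤ z' → z' ≤ N → op x (op y z') = op (op x y) (op x z') := by
        intro z'
        induction z' with
        | zero => intro h0; omega
        | succ z' ihz =>
          intro _ hz'N1
          rcases Nat.eq_zero_or_pos z' with rfl | hz0
          · simpa using h.2.2.2 x y hx1 (le_of_lt hxN') hy1 (le_of_lt hyN')
          · have hzN' : z' < N := by omega
            have hyz := mem_range h hy1 (le_of_lt hyN') hz0 (le_of_lt hzN')
            have hyzgt : y < op y z' :=
              lt_op h N y hy1 hyN' (by omega) z' hz0 (le_of_lt hzN')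
            have hxy := mem_range h hx1 (le_of_lt hxN') hy1 (le_of_lt hyN')
            have hxygt : x < op x y :=
              lt_op h N x hx1 hxN' (by omega) y hy1 (le_of_lt hyN')
            have hxz := mem_range h hx1 (le_of_lt hxN') hz0 (le_of_lt hzN')
            have e1 : op y (z' + 1) = op (op y z') (y + 1) := rec' h hy1 hyN' hz0 hzN'
            have e4 : op x (y + 1) = op (op x y) (x + 1) := by
              have := h.2.2.2 x y hx1 (le_of_lt hxN') hy1 (le_of_lt hyN')
              rwa [base1 h hy1 hyN', base1 h hx1 hxN'] at this
            have e6 : op x (z' + 1) = op (op x z') (x + 1) := rec' h hx1 hxN' hz0 hzN'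
            have e3 : op x (op y z') = op (op x y) (op x z') := ihz hz0 (le_of_lt hzN')
            have e2 : op x (op (op y z') (y + 1)) =
                op (op x (op y z')) (op x (y + 1)) :=
              ihy x (op y z') (y+1) hx1 hxN hyz.1 hyz.2 (by omega) (by omega)
                hdx (by omega)
            have e5 : op (op x y) (op (op x z') (x + 1)) =
                op (op (op x y) (op x z')) (op (op x y) (x + 1)) :=
              ihx (N+1) (op x y) (op x z') (x+1) hxy.1 hxy.2 hxz.1 hxz.2
                (by omega) (by omega) (by omega) (by omega)
            calc op x (op y (z' + 1)) = op x (op (op y z') (y + 1)) := by rw [e1]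
              _ = op (op x (op y z')) (op x (y + 1)) := e2
              _ = op (op (op x y) (op x z')) (op (op x y) (x + 1)) := by rw [e3, e4]
              _ = op (op x y) (op (op x z') (x + 1)) := e5.symm
              _ = op (op x y) (op x (z' + 1)) := by rw [e6]
      exact inner z hz1 hzN

/-- minimal period of a row. -/
noncomputable def per (N : ℕ) (op : ℕ → ℕ → ℕ) (p : ℕ) : ℕ :=
  sInf {q | 1 ≤ q ∧ op p q = N}

lemma exists_hit (h : IsLaverOp N op) {p : ℕ} (hp1 : 1 ≤ p) (hpN : p < N) :
    ∃ q, 1 ≤ q ∧ q ≤ N - p ∧ op p q = N := by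
  have claim : ∀ j, 1 ≤ j → j ≤ N - p →
      (∃ q, 1 ≤ q ∧ q ≤ j ∧ op p q = N) ∨ p + j ≤ op p j := by
    intro j
    induction j with
    | zero => intro h0; omega
    | succ j ihj =>
      intro _ hle
      rcases Nat.eq_zero_or_pos j with rfl | hj1
      · right; rw [base1 h hp1 hpN]
      · rcases ihj hj1 (by omega) with ⟨q, hq1, hq2, hq3⟩ | hge
        · exact Or.inl ⟨q, hq1, by omega, hq3⟩
        · have hjN : j < N := by omega
          have har := mem_range h hp1 (le_of_lt hpN) hj1 (le_of_lt hjN)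
          rcases eq_or_lt_of_le har.2 with heq | hlt
          · exact Or.inl ⟨j, hj1, by omega, heq⟩
          · right
            have e : op p (j + 1) = op (op p j) (p + 1) := rec' h hp1 hpN hj1 hjN
            have := lt_op h N (op p j) (by omega) hlt (by omega) (p+1)
              (by omega) (by omega)
            omega
  rcases claim (N - p) (by omega) le_rfl with ⟨q, h1, h2, h3⟩ | hge
  · exact ⟨q, h1, h2, h3⟩
  · have har := mem_range h hp1 (le_of_lt hpN) (show 1 ≤ N - p by omega) (by omega)
    exact ⟨N - p, by omega, le_rfl, by omega⟩

lemma per_spec (h : IsLaverOp N op) {p : ℕ} (hp1 : 1 ≤ p) (hpN : p < N) :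
    1 ≤ per N op p ∧ op p (per N op p) = N := by
  obtain ⟨q, h1, _, h3⟩ := exists_hit h hp1 hpN
  exact Nat.sInf_mem (⟨q, h1, h3⟩ : {q | 1 ≤ q ∧ op p q = N}.Nonempty)

lemma per_le (h : IsLaverOp N op) {p : ℕ} (hp1 : 1 ≤ p) (hpN : p < N) :
    per N op p ≤ N - p := by
  obtain ⟨q, h1, h2, h3⟩ := exists_hit h hp1 hpN
  exact le_trans (Nat.sInf_le ⟨h1, h3⟩) h2

lemma per_min (h : IsLaverOp N op) {p q : ℕ} (hq1 : 1 ≤ q)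
    (hlt : q < per N op p) : op p q ≠ N :=
  fun he => Nat.notMem_of_lt_sInf hlt ⟨hq1, he⟩

lemma values_lt (h : IsLaverOp N op) {p q : ℕ} (hp1 : 1 ≤ p) (hpN : p < N)
    (hq1 : 1 ≤ q) (hlt : q < per N op p) : op p q < N := by
  have hle : q ≤ N := by have := per_le h hp1 hpN; omega
  have := (mem_range h hp1 (le_of_lt hpN) hq1 hle).2
  have := per_min h hq1 hlt
  omega

lemma period_shift (h : IsLaverOp N op) {p : ℕ} (hp1 : 1 ≤ p) (hpN : p < N) :
    ∀ q, 1 ≤ q → q + per N op p ≤ N → op p (q + per N op p) = op p q := by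
  have hπ := per_spec h hp1 hpN
  set π := per N op p with hπdef
  intro q
  induction q with
  | zero => intro h0; omega
  | succ q ihq =>
    intro _ hle
    rcases Nat.eq_zero_or_pos q with rfl | hq1
    · have hπN : π < N := by have := per_le h hp1 hpN; omega
      have e : op p (π + 1) = op (op p π) (p + 1) := rec' h hp1 hpN hπ.1 hπN
      rw [show 0 + 1 + π = π + 1 by omega, e, hπ.2,
        rowN h (by omega) (p+1) (by omega) (by omega), base1 h hp1 hpN]
    · have h1 : op p (q + π + 1) = op (op p (q + π)) (p + 1) :=
        rec' h hp1 hpN (by omega) (by omega)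
      have h2 : op p (q + 1) = op (op p q) (p + 1) :=
        rec' h hp1 hpN hq1 (by omega)
      rw [show q + 1 + π = q + π + 1 by omega, h1, ihq hq1 (by omega), h2]

lemma op_mono (h : IsLaverOp N op) {p : ℕ} (hp1 : 1 ≤ p) (hpN : p < N) :
    ∀ d q, 1 ≤ q → 1 ≤ d → q + d ≤ per N op p → op p q < op p (q + d) := by
  have single : ∀ q, 1 ≤ q → q + 1 ≤ per N op p → op p q < op p (q + 1) := by
    intro q hq1 hle
    have hπle := per_le h hp1 hpN
    have hv : op p q < N := values_lt h hp1 hpN hq1 (by omega)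
    have e : op p (q + 1) = op (op p q) (p + 1) := rec' h hp1 hpN hq1 (by omega)
    have := lt_op h N (op p q) (by have := (mem_range h hp1 (le_of_lt hpN) hq1 (by omega)).1; omega)
      hv (by omega) (p+1) (by omega) (by omega)
    omega
  intro d
  induction d with
  | zero => intro q _ h0; omega
  | succ d ihd =>
    intro q hq1 _ hle
    rcases Nat.eq_zero_or_pos d with rfl | hd1
    · exact single q hq1 (by omega)
    · have h1 := ihd q hq1 hd1 (by omega)
      have h2 := single (q + d) (by omega) (by omega)
      have : q + (d + 1) = q + d + 1 := by omega
      rw [this]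
      omega

lemma dvd_of_hit (h : IsLaverOp N op) {p : ℕ} (hp1 : 1 ≤ p) (hpN : p < N) :
    ∀ m, 1 ≤ m → m ≤ N → op p m = N → per N op p ∣ m := by
  have hπ := per_spec h hp1 hpN
  set π := per N op p with hπdef
  have main : ∀ t m, m ≤ t → 1 ≤ m → m ≤ N → op p m = N → π ∣ m := by
    intro t
    induction t with
    | zero => intro m h0 h1; omega
    | succ t iht =>
      intro m hmt hm1 hmN hhit
      rcases lt_trichotomy m π with hlt | heq | hgt
      · exact absurd hhit (per_min h hm1 hlt)
      · exact heq ▸ dvd_refl π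
      · have hshift : op p (m - π + π) = op p (m - π) :=
          period_shift h hp1 hpN (m - π) (by omega) (by omega)
        rw [show m - π + π = m by omega] at hshift
        have := iht (m - π) (by omega) (by omega) (by omega) (by omega)
        have h2 : π ∣ (m - π) + π := dvd_add this dvd_rfl
        rwa [show m - π + π = m by omega] at h2
  exact fun m a b c => main N m b a b c

lemma hit_of_dvd (h : IsLaverOp N op) {p : ℕ} (hp1 : 1 ≤ p) (hpN : p < N) :
    ∀ m, 1 ≤ m → m ≤ N → per N op p ∣ m → op p m = N := by
  have hπ := per_spec h hp1 hpN
  set π := per N op p with hπdef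
  have main : ∀ t m, m ≤ t → 1 ≤ m → m ≤ N → π ∣ m → op p m = N := by
    intro t
    induction t with
    | zero => intro m h0 h1; omega
    | succ t iht =>
      intro m hmt hm1 hmN hdvd
      have hπm : π ≤ m := Nat.le_of_dvd (by omega) hdvd
      rcases eq_or_lt_of_le hπm with heq | hgt
      · rw [← heq]; exact hπ.2
      · have hd2 : π ∣ m - π := (Nat.dvd_sub hdvd dvd_rfl)
        have hm' : 1 ≤ m - π := by
          rcases hdvd with ⟨c, rfl⟩
          have : 2 ≤ c := by
            by_contra hc
            interval_cases c <;> omega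
          have : π * 2 ≤ π * c := Nat.mul_le_mul_left π this
          omega
        have hrec := iht (m - π) (by omega) hm' (by omega) hd2
        have hshift : op p (m - π + π) = op p (m - π) :=
          period_shift h hp1 hpN (m - π) hm' (by omega)
        rw [show m - π + π = m by omega] at hshift
        omega
  exact fun m a b c => main N m b a b c

lemma per_dvd (h : IsLaverOp N op) {p : ℕ} (hp1 : 1 ≤ p) (hpN : p < N) :
    per N op p ∣ N :=
  dvd_of_hit h hp1 hpN N (by omega) le_rfl (wrapN h (by omega) hp1 (le_of_lt hpN))

lemma reduce (h : IsLaverOp N op) {p : ℕ} (hp1 : 1 ≤ p) (hpN : p < N) :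
    ∀ m, 1 ≤ m → m ≤ N → op p m = op p ((m - 1) % per N op p + 1) := by
  have hπ := per_spec h hp1 hpN
  set π := per N op p with hπdef
  have main : ∀ t m, m ≤ t → 1 ≤ m → m ≤ N → op p m = op p ((m - 1) % π + 1) := by
    intro t
    induction t with
    | zero => intro m h0 h1; omega
    | succ t iht =>
      intro m hmt hm1 hmN
      rcases le_or_gt m π with hle | hgt
      · have : (m - 1) % π = m - 1 := Nat.mod_eq_of_lt (by omega)
        rw [this, show m - 1 + 1 = m by omega]
      · have hshift : op p (m - π + π) = op p (m - π) :=
          period_shift h hp1 hpN (m - π) (by omega) (by omega)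
        rw [show m - π + π = m by omega] at hshift
        have hmod : (m - 1) % π = (m - π - 1) % π := by
          rw [show m - 1 = (m - π - 1) + π by omega, Nat.add_mod_right]
        rw [hshift, hmod]
        exact iht (m - π) (by omega) (by omega) (by omega)
  exact fun m a b => main N m b a b

lemma col1 (h : IsLaverOp N op) {p c : ℕ} (hp1 : 1 ≤ p) (hpN : p < N)
    (hc1 : 1 ≤ c) (hcN : c ≤ N) (hdvd : per N op p ∣ (c - 1)) : op p c = p + 1 := by
  have hπ := per_spec h hp1 hpN
  rw [reduce h hp1 hpN c hc1 hcN]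
  have h0 : (c - 1) % per N op p = 0 := by
    obtain ⟨t, ht⟩ := hdvd
    rw [ht, Nat.mul_mod_right]
  rw [h0]
  simpa using base1 h hp1 hpN

lemma mod_pred {K v : ℕ} (hK : 1 ≤ K) (hv : 1 ≤ v) :
    (v - 1) % K = K - 1 ↔ K ∣ v := by
  constructor
  · intro he
    have hdm := Nat.div_add_mod (v - 1) K
    refine ⟨(v - 1) / K + 1, ?_⟩
    rw [Nat.mul_add, Nat.mul_one]
    omega
  · rintro ⟨t, rfl⟩
    have ht1 : 1 ≤ t := by
      rcases Nat.eq_zero_or_pos t with rfl | h; · omega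
      · exact h
    rcases Nat.exists_eq_add_of_le ht1 with ⟨t', rfl⟩
    have : K * (1 + t') - 1 = K * t' + (K - 1) := by
      rw [Nat.mul_add, Nat.mul_one]; omega
    rw [this, Nat.mul_add_mod, Nat.mod_eq_of_lt (by omega)]

lemma dvd_mod_shift {ρ K v : ℕ} (hρK : ρ ∣ K) (hv : 1 ≤ v) (hK : 0 < K) :
    ρ ∣ v ↔ ρ ∣ ((v - 1) % K + 1) := by
  have hdm := Nat.div_add_mod (v - 1) K
  have hKq : ρ ∣ K * ((v - 1) / K) := hρK.mul_right _
  constructor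
  · intro hv2
    have h2 := Nat.dvd_sub hv2 hKq
    rwa [show v - K * ((v - 1) / K) = (v - 1) % K + 1 by omega] at h2
  · intro hr
    have h2 := dvd_add hKq hr
    rwa [show K * ((v - 1) / K) + ((v - 1) % K + 1) = v by omega] at h2

lemma J (h : IsLaverOp N op) :
    ∀ k : ℕ, 2 ^ k < N →
      (2 ^ k ∣ N) ∧
      (∀ x, 1 ≤ x → N - 2 ^ k ≤ x → x < N → per N op x ∣ 2 ^ k) ∧
      (∀ v, 1 ≤ v → v ≤ N → op (N - 2 ^ k) v = (N - 2 ^ k) + ((v - 1) % 2 ^ k + 1)) := by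
  intro k
  induction k with
  | zero =>
    intro hlt
    simp only [pow_zero] at *
    have hb : op (N - 1) 1 = N := by
      rw [base1 h (by omega) (by omega)]; omega
    have hper1 : per N op (N - 1) = 1 := by
      have hle : per N op (N - 1) ≤ 1 := Nat.sInf_le ⟨le_rfl, hb⟩
      have h1 := (per_spec h (p := N - 1) (by omega) (by omega)).1
      omega
    refine ⟨one_dvd N, ?_, ?_⟩
    · intro x hx1 hxl hxN
      have hx : x = N - 1 := by omega
      rw [hx, hper1]
    · intro v hv1 hvN
      have := hit_of_dvd h (p := N - 1) (by omega) (by omega) v hv1 hvN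
        (by rw [hper1]; exact one_dvd v)
      rw [this, Nat.mod_one]
      omega
  | succ k ihk =>
    intro hlt
    have h2K : (2 : ℕ) ^ (k + 1) = 2 * 2 ^ k := by rw [pow_succ]; ring
    have hKN : 2 ^ k < N := by
      have : (2:ℕ)^k ≤ 2 * 2^k := by omega
      omega
    obtain ⟨hdvd, hper, hrow⟩ := ihk hKN
    set K := 2 ^ k with hKdef
    have hK1 : 1 ≤ K := Nat.one_le_two_pow
    rw [h2K]
    have h2KN : 2 * K < N := by rw [h2K] at hlt; exact hlt
    have hKu0 : K ∣ N - K := Nat.dvd_sub hdvd dvd_rfl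
    have hKp0 : K ∣ N - 2 * K := Nat.dvd_sub hdvd (dvd_mul_left K 2)
    -- middle rows
    have middle : ∀ p, N - 2 * K < p → p < N - K → per N op p ∣ K := by
      intro p hpl hpu
      have hp1 : 1 ≤ p := by omega
      have hpN : p < N := by omega
      have hp'1 : 1 ≤ p - (N - 2 * K) := by omega
      have hp'K : p - (N - 2 * K) < K := by omega
      set w := (N - K) + (p - (N - 2 * K)) with hwdef
      have hwN : w < N := by omega
      have hρ : per N op w ∣ K := hper w (by omega) (by omega) hwN
      set ρ := per N op w with hρdef
      have hρ1 : 1 ≤ ρ := (per_spec h (p := w) (by omega) hwN).1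
      have hop_u0_p : op (N - K) p = w := by
        rw [hrow p hp1 (by omega)]
        obtain ⟨s, hs⟩ := hKp0
        have hmod : (p - 1) % K = (p - (N - 2 * K)) - 1 := by
          rw [show p - 1 = K * s + ((p - (N - 2 * K)) - 1) by omega,
            Nat.mul_add_mod, Nat.mod_eq_of_lt (by omega)]
        rw [hmod]
        omega
      have hρw_u0 : ρ ∣ N - K := dvd_trans hρ hKu0
      have key : ∀ q, 1 ≤ q → q ≤ N → ρ ∣ q → K ∣ op p q := by
        intro q hq1 hqN hq
        have hopq := mem_range h hp1 (le_of_lt hpN) hq1 hqN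
        have hLD := selfDistrib h (by omega) (N - K) p q (by omega) (by omega)
          hp1 (by omega) hq1 hqN
        rw [hop_u0_p] at hLD
        have hq' : op (N - K) q = (N - K) + ((q - 1) % K + 1) := hrow q hq1 hqN
        have hρq : ρ ∣ ((q - 1) % K + 1) := (dvd_mod_shift hρ hq1 (by omega)).mp hq
        have hu0q_range := mem_range h (p := N - K) (q := q) (by omega) (by omega) hq1 hqN
        have hhit : op w (op (N - K) q) = N := by
          apply hit_of_dvd h (p := w) (by omega) hwN _ hu0q_range.1 hu0q_range.2
          rw [hq']
          exact dvd_add hρw_u0 hρq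
        rw [hhit] at hLD
        rw [hrow (op p q) hopq.1 hopq.2] at hLD
        have hmm : (op p q - 1) % K = K - 1 := by omega
        exact (mod_pred hK1 hopq.1).mp hmm
      have hπ := per_spec h hp1 hpN
      set π := per N op p with hπdef
      have hπle : π ≤ N - p := per_le h hp1 hpN
      have hρπ : ρ ∣ π := by
        have hLD := selfDistrib h (by omega) (N - K) p π (by omega) (by omega)
          hp1 (by omega) hπ.1 (by omega)
        rw [hop_u0_p, hπ.2, wrapN h (by omega) (p := N - K) (by omega) (by omega)] at hLD
        have hu0π_range := mem_range h (p := N - K) (q := π) (by omega) (by omega)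
          hπ.1 (by omega)
        have hd := dvd_of_hit h (p := w) (by omega) hwN (op (N - K) π)
          hu0π_range.1 hu0π_range.2 hLD.symm
        rw [hrow π hπ.1 (by omega)] at hd
        have hd2 : ρ ∣ ((π - 1) % K + 1) := (Nat.dvd_add_right hρw_u0).mp hd
        exact (dvd_mod_shift hρ hπ.1 (by omega)).mpr hd2
      by_cases h3 : 3 * ρ ≤ π
      · exfalso
        have m1 : op p ρ < op p (ρ + ρ) := op_mono h hp1 hpN ρ ρ hρ1 hρ1 (by omega)
        have m2 : op p (ρ + ρ) < op p (ρ + ρ + ρ) :=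
          op_mono h hp1 hpN ρ (ρ + ρ) (by omega) hρ1 (by omega)
        have d1 : K ∣ op p ρ := key ρ hρ1 (by omega) dvd_rfl
        have d2 : K ∣ op p (ρ + ρ) := key (ρ + ρ) (by omega) (by omega) ⟨2, by ring⟩
        have d3 : K ∣ op p (ρ + ρ + ρ) := key (ρ + ρ + ρ) (by omega) (by omega) ⟨3, by ring⟩
        have g1 : p < op p ρ := lt_op h N p hp1 hpN (by omega) ρ hρ1 (by omega)
        have r3 : op p (ρ + ρ + ρ) ≤ N :=
          (mem_range h hp1 (le_of_lt hpN) (by omega : 1 ≤ ρ + ρ + ρ) (by omega)).2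
        have e21 : K ≤ op p (ρ + ρ) - op p ρ :=
          Nat.le_of_dvd (by omega) (Nat.dvd_sub d2 d1)
        have e32 : K ≤ op p (ρ + ρ + ρ) - op p (ρ + ρ) :=
          Nat.le_of_dvd (by omega) (Nat.dvd_sub d3 d2)
        omega
      · obtain ⟨m, hm⟩ := hρπ
        have hm3 : m < 3 := by
          by_contra hc
          have : ρ * 3 ≤ ρ * m := Nat.mul_le_mul_left ρ (by omega)
          omega
        have hm1 : 1 ≤ m := by
          rcases Nat.eq_zero_or_pos m with rfl | hh
          · omega
          · exact hh
        interval_cases m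
        · rw [hm, mul_one]; exact hρ
        · obtain ⟨j, hj, hrj⟩ := (Nat.dvd_prime_pow Nat.prime_two).mp hρ
          have hjk : j < k := by
            by_contra hc
            have : j = k := by omega
            rw [this] at hrj
            omega
          have hπ2 : π = 2 ^ (j + 1) := by rw [hm, hrj, pow_succ]
          rw [hπ2]
          exact pow_dvd_pow 2 (by omega)
    -- combined period fact for all rows above N - 2K
    have hcomb : ∀ x, N - 2 * K < x → x < N → per N op x ∣ K := by
      intro x hx1 hx2
      rcases lt_or_ge x (N - K) with hxu | hxu
      · exact middle x hx1 hxu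
      · exact hper x (by omega) hxu hx2
    -- the row N - 2K
    have chain : ∀ j, 1 ≤ j → j ≤ 2 * K → op (N - 2 * K) j = (N - 2 * K) + j := by
      intro j
      induction j with
      | zero => intro h0; omega
      | succ j ihj =>
        intro _ hle
        rcases Nat.eq_zero_or_pos j with rfl | hj1
        · rw [base1 h (by omega) (by omega)]
        · have e : op (N - 2 * K) (j + 1) = op (op (N - 2 * K) j) (N - 2 * K + 1) :=
            rec' h (by omega) (by omega) hj1 (by omega)
          rw [ihj hj1 (by omega)] at e
          have hx := hcomb (N - 2 * K + j) (by omega) (by omega)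
          have hcol : op (N - 2 * K + j) (N - 2 * K + 1) = (N - 2 * K + j) + 1 :=
            col1 h (by omega) (by omega) (by omega) (by omega)
              (by rw [show (N - 2 * K + 1) - 1 = N - 2 * K by omega]
                  exact dvd_trans hx hKp0)
          rw [e, hcol]
          omega
    have hhit2K : op (N - 2 * K) (2 * K) = N := by
      rw [chain (2 * K) (by omega) le_rfl]; omega
    have hperp0 : per N op (N - 2 * K) = 2 * K := by
      have hle : per N op (N - 2 * K) ≤ 2 * K := Nat.sInf_le ⟨by omega, hhit2K⟩
      have h1 := (per_spec h (p := N - 2 * K) (by omega) (by omega)).1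
      have h2 := (per_spec h (p := N - 2 * K) (by omega) (by omega)).2
      by_contra hne
      rw [chain _ h1 (by omega)] at h2
      omega
    refine ⟨?_, ?_, ?_⟩
    · have := per_dvd h (p := N - 2 * K) (by omega) (by omega)
      rwa [hperp0] at this
    · intro x hx1 hxl hxN
      rcases eq_or_lt_of_le hxl with heq | hgt
      · rw [← heq, hperp0]
      · exact dvd_trans (hcomb x (by omega) hxN) (dvd_mul_left K 2)
    · intro v hv1 hvN
      have hred := reduce h (p := N - 2 * K) (by omega) (by omega) v hv1 hvN
      rw [hperp0] at hred
      have hmodlt : (v - 1) % (2 * K) < 2 * K := Nat.mod_lt _ (by omega)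
      rw [hred, chain ((v - 1) % (2 * K) + 1) (by omega) (by omega)]

lemma pow2_of (h : IsLaverOp N op) (hN : 1 ≤ N) : ∃ k, N = 2 ^ k := by
  rcases eq_or_lt_of_le (Nat.pow_log_le_self 2 (by omega : N ≠ 0)) with he | hlt
  · exact ⟨Nat.log 2 N, he.symm⟩
  · exfalso
    obtain ⟨hdvd, -, -⟩ := J h (Nat.log 2 N) hlt
    have h2 : N < 2 ^ (Nat.log 2 N + 1) := Nat.lt_pow_succ_log_self (by norm_num) N
    obtain ⟨s, hs⟩ := hdvd
    have hs2 : 2 ≤ s := by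
      rcases Nat.lt_or_ge s 2 with hh | hh
      · interval_cases s <;> omega
      · exact hh
    have hmul : 2 ^ Nat.log 2 N * 2 ≤ 2 ^ Nat.log 2 N * s :=
      Nat.mul_le_mul_left _ hs2
    have hpow : (2:ℕ) ^ (Nat.log 2 N + 1) = 2 ^ Nat.log 2 N * 2 := pow_succ 2 _
    omega

end LaverLD

/-- the operation satisfies the left self-distributivity law on `{1, …, N}`
if and only if `N` is a power of `2`. -/
theorem laver_LD_iff_pow_two (N : ℕ) (hN : 1 ≤ N) (op : ℕ → ℕ → ℕ) (h : IsLaverOp N op) :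
    (∀ x y z, 1 ≤ x → x ≤ N → 1 ≤ y → y ≤ N → 1 ≤ z → z ≤ N →
      op x (op y z) = op (op x y) (op x z)) ↔ ∃ k, N = 2 ^ k := by
  constructor
  · intro _
    exact LaverLD.pow2_of h hN
  · intro _
    exact LaverLD.selfDistrib h hN
end

section
/- Let A_n = ({1, …, 2^n}, ∗) be the n-th Laver table. For every p in {1, …, 2^n} there exists a unique r with 0 ≤ r ≤ n such that the values p ∗ 1 < p ∗ 2 < ⋯ < p ∗ 2^r form a strictly increasing sequence ending with p ∗ 2^r = 2^n, and the row of p is periodic with period 2^r: p ∗ (q + 2^r) = p ∗ q for every q with 1 ≤ q ≤ 2^n − 2^r. Moreover, writing π_n(p) = 2^r for this period, one has π_n(2^n − 1) = 1 and π_n(2^n) = 2^n. -/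
def GoodPeriod (n : ℕ) (op : ℕ → ℕ → ℕ) (p r : ℕ) : Prop :=
  r ≤ n ∧
  (∀ q q', 1 ≤ q → q < q' → q' ≤ 2 ^ r → op p q < op p q') ∧
  op p (2 ^ r) = 2 ^ n ∧
  (∀ q, 1 ≤ q → q ≤ 2 ^ n - 2 ^ r → op p (q + 2 ^ r) = op p q)

lemma row_top {n : ℕ} {op : ℕ → ℕ → ℕ} (h : IsLaverOp (2 ^ n) op) :
    ∀ q, 1 ≤ q → q ≤ 2 ^ n → op (2 ^ n) q = q := by
  have hN1 : 1 ≤ 2 ^ n := Nat.one_le_two_pow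
  intro q hq
  induction q, hq using Nat.le_induction with
  | base => intro _; exact h.2.2.1
  | succ q hq ih =>
    intro hq1N
    have hqN : q < 2 ^ n := by omega
    have h1 : op q 1 = q + 1 := h.2.1 q hq hqN
    have hd := h.2.2.2 (2 ^ n) q hN1 le_rfl hq hqN.le
    rw [h1, h.2.2.1, ih hqN.le] at hd
    rw [hd, h1]

lemma row_exists {n : ℕ} {op : ℕ → ℕ → ℕ} (h : IsLaverOp (2 ^ n) op) :
    ∀ k p, 1 ≤ p → p + k = 2 ^ n →
      ∃ r, GoodPeriod n op p r ∧ (p < 2 ^ n → ∀ y, 1 ≤ y → y ≤ 2 ^ n → p < op p y) := by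
  have hN1 : 1 ≤ 2 ^ n := Nat.one_le_two_pow
  have htopq := row_top h
  have hrange := h.1
  have hsucc := h.2.1
  have htop := h.2.2.1
  have hdist := h.2.2.2
  intro k
  induction k using Nat.strong_induction_on with
  | _ k IH =>
  intro p hp hpk
  rcases Nat.eq_zero_or_pos k with rfl | hk
  · -- p = 2^n
    have hpe : p = 2 ^ n := by omega
    subst hpe
    refine ⟨n, ⟨le_rfl, ?_, ?_, ?_⟩, ?_⟩
    · intro q q' hq hqq' hq'
      rw [htopq q hq (by omega), htopq q' (by omega) hq']
      exact hqq'
    · exact htopq (2 ^ n) hN1 le_rfl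
    · intro q hq hle; exfalso; omega
    · intro hlt; exfalso; omega
  · -- p < 2^n
    have hpN : p < 2 ^ n := by omega
    have gt_fact : ∀ x y, p < x → x < 2 ^ n → 1 ≤ y → y ≤ 2 ^ n → x < op x y := by
      intro x y hx hxN hy hyN
      obtain ⟨r, _, hgt⟩ := IH (2 ^ n - x) (by omega) x (by omega) (by omega)
      exact hgt hxN y hy hyN
    have step1 : ∀ q, 1 ≤ q → q < 2 ^ n → op p (q + 1) = op (op p q) (p + 1) := by
      intro q hq hqN
      have h1 : op q 1 = q + 1 := hsucc q hq hqN
      have hd := hdist p q hp hpN.le hq hqN.le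
      rw [h1, hsucc p hp hpN] at hd
      exact hd
    have lb : ∀ q, 1 ≤ q → q ≤ 2 ^ n → p + 1 ≤ op p q := by
      intro q hq
      induction q, hq using Nat.le_induction with
      | base => intro _; rw [hsucc p hp hpN]
      | succ q hq ih =>
        intro hq1N
        have hqN : q < 2 ^ n := by omega
        have hb := hrange p q hp hpN.le hq hqN.le
        rw [step1 q hq hqN]
        by_cases hx : op p q = 2 ^ n
        · rw [hx, htopq (p + 1) (by omega) (by omega)]
        · have hlt : op p q < 2 ^ n := lt_of_le_of_ne hb.2 hx
          have hlow := ih hqN.le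
          have := gt_fact (op p q) (p + 1) (by omega) hlt (by omega) (by omega)
          omega
    have noesc : ∀ q, 1 ≤ q → q ≤ 2 ^ n → (∀ m, 1 ≤ m → m < q → op p m ≠ 2 ^ n) →
        p + q ≤ op p q := by
      intro q hq
      induction q, hq using Nat.le_induction with
      | base => intro _ _; rw [hsucc p hp hpN]
      | succ q hq ih =>
        intro hq1N hno
        have h1 : p + q ≤ op p q := ih (by omega) (fun m hm hmq => hno m hm (by omega))
        have h2 : op p q ≠ 2 ^ n := hno q hq (by omega)
        have h3 : op p q < 2 ^ n := lt_of_le_of_ne (hrange p q hp hpN.le hq (by omega)).2 h2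
        rw [step1 q hq (by omega)]
        have := gt_fact (op p q) (p + 1) (by omega) h3 (by omega) (by omega)
        omega
    have hexT : ∃ m, (1 ≤ m ∧ m ≤ 2 ^ n) ∧ op p m = 2 ^ n := by
      by_contra hc
      push_neg at hc
      have hno : ∀ m, 1 ≤ m → m < 2 ^ n → op p m ≠ 2 ^ n := fun m hm hmN =>
        hc m ⟨hm, by omega⟩
      have h1 := noesc (2 ^ n) hN1 le_rfl hno
      have h2 := (hrange p (2 ^ n) hp hpN.le hN1 le_rfl).2
      omega
    classical
    set T := Nat.find hexT with hTdef
    obtain ⟨⟨hT1, hTN⟩, hTval⟩ := Nat.find_spec hexT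
    have hneq : ∀ m, 1 ≤ m → m < T → op p m ≠ 2 ^ n := by
      intro m hm hmT hcon
      exact Nat.find_min hexT hmT ⟨⟨hm, by omega⟩, hcon⟩
    have stepinc : ∀ q, 1 ≤ q → q < T → op p q < op p (q + 1) := by
      intro q hq hqT
      have h3 : op p q < 2 ^ n :=
        lt_of_le_of_ne (hrange p q hp hpN.le hq (by omega)).2 (hneq q hq hqT)
      have hlow : p + 1 ≤ op p q := lb q hq (by omega)
      rw [step1 q hq (by omega)]
      exact gt_fact (op p q) (p + 1) (by omega) h3 (by omega) (by omega)
    have mono : ∀ q', q' ≤ T → ∀ q, 1 ≤ q → q < q' → op p q < op p q' := by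
      intro q'
      induction q' with
      | zero => omega
      | succ q' ih =>
        intro hq'T q hq hqq'
        rcases Nat.lt_or_ge q q' with hlt | hge
        · have h1 := ih (by omega) q hq hlt
          have h2 := stepinc q' (by omega) (by omega)
          omega
        · have heq : q = q' := by omega
          subst heq
          exact stepinc q hq (by omega)
    have per : ∀ q, 1 ≤ q → q + T ≤ 2 ^ n → op p (q + T) = op p q := by
      intro q hq
      induction q, hq using Nat.le_induction with
      | base =>
        intro hle
        have hs : op p (T + 1) = op (op p T) (p + 1) := step1 T hT1 (by omega)
        rw [show 1 + T = T + 1 by ring, hs, hTval,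
          htopq (p + 1) (by omega) (by omega), hsucc p hp hpN]
      | succ q hq ih =>
        intro hle
        rw [show q + 1 + T = (q + T) + 1 by ring, step1 (q + T) (by omega) (by omega),
          ih (by omega), ← step1 q hq (by omega)]
    have perk : ∀ j q, 1 ≤ q → q + j * T ≤ 2 ^ n → op p (q + j * T) = op p q := by
      intro j
      induction j with
      | zero => intro q hq hle; simp
      | succ j ih =>
        intro q hq hle
        have hmul : (j + 1) * T = T + j * T := by ring
        rw [show q + (j + 1) * T = (q + T) + j * T by ring,
          ih (q + T) (by omega) (by omega), per q hq (by omega)]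
    have hdvd : T ∣ 2 ^ n := by
      by_contra hnd
      set s := 2 ^ n % T with hs
      have hs1 : 1 ≤ s := by
        rcases Nat.eq_zero_or_pos s with h0 | hpos
        · exact absurd (Nat.dvd_of_mod_eq_zero h0) hnd
        · exact hpos
      have hsT : s < T := Nat.mod_lt _ (by omega)
      have hNs : 2 ^ n = s + (2 ^ n / T) * T := by
        rw [hs]; exact (Nat.mod_add_div' _ _).symm
      have hop : op p (2 ^ n) = op p s := by
        have := perk (2 ^ n / T) s hs1 (by omega)
        rw [← hNs] at this
        exact this
      have hd := hdist p (2 ^ n) hp hpN.le hN1 le_rfl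
      rw [htop, hsucc p hp hpN, hop, ← step1 s hs1 (by omega)] at hd
      have hmono := mono (s + 1) (by omega) 1 le_rfl (by omega)
      rw [hsucc p hp hpN] at hmono
      omega
    obtain ⟨r, hrn, hrT⟩ := (Nat.dvd_prime_pow Nat.prime_two).mp hdvd
    refine ⟨r, ⟨hrn, ?_, ?_, ?_⟩, ?_⟩
    · intro q q' hq hqq' hq'
      rw [← hrT] at hq'
      exact mono q' hq' q hq hqq'
    · rw [← hrT]; exact hTval
    · intro q hq hqle
      rw [← hrT] at hqle ⊢
      exact per q hq (by omega)
    · intro _ y hy hyN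
      have := lb y hy hyN
      omega
/-- every row of the `n`-th Laver table has a unique period `2^r` with
`0 ≤ r ≤ n`; moreover `π_n(2^n − 1) = 1` and `π_n(2^n) = 2^n`. -/
theorem laver_periods (n : ℕ) (op : ℕ → ℕ → ℕ) (h : IsLaverOp (2 ^ n) op) :
    (∀ p, 1 ≤ p → p ≤ 2 ^ n → ∃! r, GoodPeriod n op p r) ∧
    (1 ≤ n → ∀ r, GoodPeriod n op (2 ^ n - 1) r → 2 ^ r = 1) ∧
    (∀ r, GoodPeriod n op (2 ^ n) r → 2 ^ r = 2 ^ n) := by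
  have hN1 : 1 ≤ 2 ^ n := Nat.one_le_two_pow
  refine ⟨?_, ?_, ?_⟩
  · intro p hp hpN
    obtain ⟨r, hr, _⟩ := row_exists h (2 ^ n - p) p hp (by omega)
    refine ⟨r, hr, ?_⟩
    intro r' hr'
    rcases lt_trichotomy r' r with hlt | heq | hgt
    · exfalso
      have hm := hr.2.1 (2 ^ r') (2 ^ r) Nat.one_le_two_pow
        (Nat.pow_lt_pow_right one_lt_two hlt) le_rfl
      rw [hr'.2.2.1, hr.2.2.1] at hm
      exact lt_irrefl _ hm
    · exact heq
    · exfalso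
      have hm := hr'.2.1 (2 ^ r) (2 ^ r') Nat.one_le_two_pow
        (Nat.pow_lt_pow_right one_lt_two hgt) le_rfl
      rw [hr'.2.2.1, hr.2.2.1] at hm
      exact lt_irrefl _ hm
  · intro hn r hr
    have h2N : 2 ≤ 2 ^ n := by
      calc 2 = 2 ^ 1 := by norm_num
      _ ≤ 2 ^ n := Nat.pow_le_pow_right (by norm_num) hn
    have hp1 : 1 ≤ 2 ^ n - 1 := by omega
    have hlt : 2 ^ n - 1 < 2 ^ n := by omega
    have hone : op (2 ^ n - 1) 1 = 2 ^ n := by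
      have := h.2.1 (2 ^ n - 1) hp1 hlt
      omega
    by_contra hne
    have h2 : 1 < 2 ^ r := by
      have := Nat.one_le_two_pow (n := r)
      omega
    have hm := hr.2.1 1 (2 ^ r) le_rfl h2 le_rfl
    rw [hone, hr.2.2.1] at hm
    exact lt_irrefl _ hm
  · intro r hr
    have ht := row_top h (2 ^ r) Nat.one_le_two_pow
      (Nat.pow_le_pow_right (by norm_num) hr.1)
    exact ht.symm.trans hr.2.2.1
end

section
/- For every n ≥ 1, the map proj_n : {1, …, 2^n} → {1, …, 2^{n−1}} sending x to x mod 2^{n−1} (with representatives taken in {1, …, 2^{n−1}}) is a surjective magma homomorphism from A_n to A_{n−1}, i.e. proj_n(x ∗ y) = proj_n(x) ∗ proj_n(y) for all x, y; moreover, for every p in {1, …, 2^n}, either π_n(p) = π_{n−1}(proj_n(p)) or π_n(p) = 2·π_{n−1}(proj_n(p)). -/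
/-- `q` is the period `π(p)`: the least `q ≥ 1` with `p ∗ q = N`. -/
def LeastPeriod (N : ℕ) (op : ℕ → ℕ → ℕ) (p q : ℕ) : Prop :=
  1 ≤ q ∧ op p q = N ∧ ∀ q', 1 ≤ q' → op p q' = N → q ≤ q'

/-- The projection `x ↦ x mod 2^(n−1)` with representatives taken in `{1, …, 2^(n−1)}`. -/
def laverProj (n x : ℕ) : ℕ := (x - 1) % 2 ^ (n - 1) + 1

namespace LaverAux

variable {M : ℕ} {op : ℕ → ℕ → ℕ}

theorem top_row (h : IsLaverOp M op) : ∀ q, 1 ≤ q → q ≤ M → op M q = q := by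
  intro q
  induction q with
  | zero => intro h1 _; omega
  | succ m ih =>
    intro h1 h2
    rcases Nat.eq_zero_or_pos m with hm | hm
    · subst hm; exact h.2.2.1
    · have hmM : m < M := by omega
      have e1 : op m 1 = m + 1 := h.2.1 m hm hmM
      have e2 := h.2.2.2 M m (by omega) le_rfl hm (by omega)
      rw [e1] at e2
      rw [e2, ih hm (by omega), h.2.2.1, e1]

theorem step (h : IsLaverOp M op) (p z : ℕ) (hp1 : 1 ≤ p) (hpM : p ≤ M)
    (hz1 : 1 ≤ z) (hzM : z < M) : op p (z + 1) = op (op p z) (op p 1) := by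
  have e1 : op z 1 = z + 1 := h.2.1 z hz1 hzM
  have e2 := h.2.2.2 p z hp1 hpM hz1 (le_of_lt hzM)
  rw [e1] at e2; exact e2

theorem gt_aux (h : IsLaverOp M op) : ∀ k p, M - p ≤ k → 1 ≤ p → p < M →
    ∀ q, 1 ≤ q → q ≤ M → p < op p q := by
  intro k
  induction k with
  | zero => intro p hk h1 h2; omega
  | succ k ih =>
    intro p hk hp1 hpM q
    induction q with
    | zero => intro h1 _; omega
    | succ m ihm =>
      intro _ hq2
      rcases Nat.eq_zero_or_pos m with hm | hm
      · subst hm; rw [h.2.1 p hp1 hpM]; omega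
      · have hr : p < op p m := ihm hm (by omega)
        have hrange := h.1 p m hp1 (by omega) hm (by omega)
        have hp1r : op p 1 = p + 1 := h.2.1 p hp1 hpM
        rw [step h p m hp1 (by omega) hm (by omega), hp1r]
        rcases Nat.lt_or_ge (op p m) M with hN | hN
        · have := ih (op p m) (by omega) (by omega) hN (p + 1) (by omega) (by omega)
          omega
        · have hOM : op p m = M := by omega
          rw [hOM, top_row h (p + 1) (by omega) (by omega)]
          omega

theorem row_gt (h : IsLaverOp M op) (p q : ℕ) (hp1 : 1 ≤ p) (hpM : p < M)
    (hq1 : 1 ≤ q) (hqM : q ≤ M) : p < op p q :=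
  gt_aux h M p (by omega) hp1 hpM q hq1 hqM

theorem lt_succ (h : IsLaverOp M op) (p z : ℕ) (hp1 : 1 ≤ p) (hpM : p ≤ M)
    (hz1 : 1 ≤ z) (hzM : z < M) (hlt : op p z < M) : op p z < op p (z + 1) := by
  have hrange := h.1 p z hp1 hpM hz1 (by omega)
  have h1range := h.1 p 1 hp1 hpM (by omega) (by omega)
  rw [step h p z hp1 hpM hz1 hzM]
  exact row_gt h (op p z) (op p 1) hrange.1 hlt h1range.1 h1range.2

theorem exists_period (h : IsLaverOp M op) (p : ℕ) (hp1 : 1 ≤ p) (hpM : p ≤ M) :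
    ∃ q, 1 ≤ q ∧ q ≤ M ∧ op p q = M := by
  have key : ∀ q, 1 ≤ q → q ≤ M →
      (∃ q', 1 ≤ q' ∧ q' ≤ q ∧ op p q' = M) ∨ q ≤ op p q := by
    intro q
    induction q with
    | zero => intro h1 _; omega
    | succ m ihm =>
      intro _ h2
      rcases Nat.eq_zero_or_pos m with hm | hm
      · subst hm
        have hb := h.1 p 1 hp1 hpM (by omega) (by omega)
        right; show 1 ≤ op p 1; omega
      · rcases ihm hm (by omega) with ⟨q', hq⟩ | hge
        · exact Or.inl ⟨q', hq.1, by omega, hq.2.2⟩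
        · have hub := h.1 p m hp1 hpM hm (by omega)
          rcases Nat.lt_or_ge (op p m) M with hN | hN
          · have := lt_succ h p m hp1 hpM hm (by omega) hN
            right; omega
          · have hMe : op p m = M := by omega
            exact Or.inl ⟨m, hm, by omega, hMe⟩
  rcases key M (by omega) le_rfl with ⟨q', h1, h2, h3⟩ | hge
  · exact ⟨q', h1, h2, h3⟩
  · have := h.1 p M hp1 hpM (by omega) le_rfl
    exact ⟨M, by omega, le_rfl, by omega⟩

theorem periodic (h : IsLaverOp M op) (p w : ℕ) (hp1 : 1 ≤ p) (hpM : p ≤ M)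
    (hw1 : 1 ≤ w) (hw : op p w = M) :
    ∀ t, 1 ≤ t → t + w ≤ M → op p (t + w) = op p t := by
  intro t
  induction t with
  | zero => intro h1 _; omega
  | succ m ihm =>
    intro _ h2
    rcases Nat.eq_zero_or_pos m with hm | hm
    · subst hm
      have e := step h p w hp1 hpM hw1 (by omega)
      rw [show 1 + w = w + 1 by omega, e, hw]
      have h1r := h.1 p 1 hp1 hpM (by omega) (by omega)
      exact top_row h (op p 1) h1r.1 h1r.2
    · have e1 := step h p (m + w) hp1 hpM (by omega) (by omega)
      rw [show m + 1 + w = (m + w) + 1 by omega, e1, ihm hm (by omega)]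
      exact (step h p m hp1 hpM hm (by omega)).symm

theorem period_dvd (h : IsLaverOp M op) (p w : ℕ) (hp1 : 1 ≤ p) (hpM : p ≤ M)
    (hw1 : 1 ≤ w) (hw : op p w = M)
    (hmin : ∀ q', 1 ≤ q' → op p q' = M → w ≤ q') :
    ∀ t, 1 ≤ t → t ≤ M → op p t = M → w ∣ t := by
  intro t
  induction t using Nat.strong_induction_on with
  | _ t iht =>
    intro ht1 htM htop
    rcases Nat.lt_or_ge t (w + 1) with hle | hgt
    · have h1 := hmin t ht1 htop
      have h2 : t = w := by omega
      exact h2 ▸ dvd_refl w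
    · have h1 : 1 ≤ t - w := by omega
      have e : op p (t - w + w) = op p (t - w) :=
        periodic h p w hp1 hpM hw1 hw (t - w) h1 (by omega)
      rw [show t - w + w = t by omega] at e
      have htop' : op p (t - w) = M := by rw [← e]; exact htop
      have hd := iht (t - w) (by omega) h1 (by omega) htop'
      have : t = (t - w) + w := by omega
      rw [this]; exact dvd_add hd (dvd_refl w)

theorem mono (h : IsLaverOp M op) (p w : ℕ) (hp1 : 1 ≤ p) (hpM : p ≤ M)
    (hw1 : 1 ≤ w) (hwM : w ≤ M) (hw : op p w = M)
    (hmin : ∀ q', 1 ≤ q' → op p q' = M → w ≤ q') :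
    ∀ a b, 1 ≤ a → a < b → b ≤ w → op p a < op p b := by
  intro a b ha
  induction b with
  | zero => intro h1 _; omega
  | succ m ihm =>
    intro hab hbw
    have hm1 : 1 ≤ m := by omega
    have hmlt : op p m < M := by
      have hub := h.1 p m hp1 hpM hm1 (by omega)
      rcases Nat.lt_or_ge (op p m) M with h1 | h1
      · exact h1
      · have hMe : op p m = M := by omega
        have := hmin m hm1 hMe; omega
    have hstep := lt_succ h p m hp1 hpM hm1 (by omega) hmlt
    rcases Nat.lt_or_ge a m with ham | ham
    · have := ihm ham (by omega); omega
    · have hae : a = m := by omega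
      rw [hae]; exact hstep

theorem proj_bounds (n x : ℕ) : 1 ≤ laverProj n x ∧ laverProj n x ≤ 2 ^ (n - 1) := by
  unfold laverProj
  have hpos : 0 < 2 ^ (n - 1) := Nat.pow_pos (by norm_num)
  have := Nat.mod_lt (x - 1) hpos
  omega

theorem proj_low (n x : ℕ) (h1 : 1 ≤ x) (h2 : x ≤ 2 ^ (n - 1)) : laverProj n x = x := by
  unfold laverProj
  rw [Nat.mod_eq_of_lt (by omega)]
  omega

theorem proj_high (n x : ℕ) (h1 : 2 ^ (n - 1) < x) (h2 : x ≤ 2 * 2 ^ (n - 1)) :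
    laverProj n x = x - 2 ^ (n - 1) := by
  unfold laverProj
  rw [Nat.mod_eq_sub_mod (by omega), Nat.mod_eq_of_lt (by omega)]
  omega

theorem pow_eq (n : ℕ) (hn : 1 ≤ n) : 2 ^ n = 2 * 2 ^ (n - 1) := by
  cases n with
  | zero => omega
  | succ m => rw [pow_succ, Nat.succ_sub_one, Nat.mul_comm]

theorem proj_top (n : ℕ) (hn : 1 ≤ n) : laverProj n (2 ^ n) = 2 ^ (n - 1) := by
  have hNN := pow_eq n hn
  have hpos : 0 < 2 ^ (n - 1) := Nat.pow_pos (by norm_num)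
  rw [proj_high n (2 ^ n) (by omega) (by omega)]
  omega

theorem proj_eq_top (n x : ℕ) (hn : 1 ≤ n) (h1 : 1 ≤ x) (h2 : x ≤ 2 ^ n)
    (he : laverProj n x = 2 ^ (n - 1)) : x = 2 ^ (n - 1) ∨ x = 2 ^ n := by
  have hNN := pow_eq n hn
  rcases Nat.lt_or_ge (2 ^ (n - 1)) x with hc | hc
  · have := proj_high n x hc (by omega)
    right; omega
  · have := proj_low n x h1 hc
    left; omega

theorem proj_succ (n : ℕ) (hn : 1 ≤ n) {op' : ℕ → ℕ → ℕ}
    (h' : IsLaverOp (2 ^ (n - 1)) op') (x : ℕ)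
    (hx1 : 1 ≤ x) (hx2 : x < 2 ^ n) :
    laverProj n (x + 1) = op' (laverProj n x) 1 := by
  have hNN := pow_eq n hn
  have hpos : 0 < 2 ^ (n - 1) := Nat.pow_pos (by norm_num)
  rcases Nat.lt_trichotomy x (2 ^ (n - 1)) with h1 | h1 | h1
  · rw [proj_low n x hx1 (by omega), proj_low n (x + 1) (by omega) (by omega)]
    exact (h'.2.1 x hx1 h1).symm
  · rw [h1, proj_low n (2 ^ (n - 1)) (by omega) le_rfl,
      proj_high n (2 ^ (n - 1) + 1) (by omega) (by omega)]
    rw [h'.2.2.1]; omega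
  · rw [proj_high n x h1 (by omega), proj_high n (x + 1) (by omega) (by omega)]
    rw [h'.2.1 (x - 2 ^ (n - 1)) (by omega) (by omega)]
    omega

end LaverAux

namespace LaverAux

theorem hom_aux (n : ℕ) (hn : 1 ≤ n) (op op' : ℕ → ℕ → ℕ)
    (h : IsLaverOp (2 ^ n) op) (h' : IsLaverOp (2 ^ (n - 1)) op') :
    ∀ k x, 2 ^ n - x ≤ k → 1 ≤ x → x ≤ 2 ^ n → ∀ y, 1 ≤ y → y ≤ 2 ^ n →
      laverProj n (op x y) = op' (laverProj n x) (laverProj n y) := by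
  have hNN := pow_eq n hn
  have hpos : 0 < 2 ^ (n - 1) := Nat.pow_pos (by norm_num)
  intro k
  induction k with
  | zero =>
    intro x hk hx1 hx2 y hy1 hy2
    have hxe : x = 2 ^ n := by omega
    subst hxe
    have hfy := proj_bounds n y
    rw [top_row h y hy1 hy2, proj_top n hn, top_row h' (laverProj n y) hfy.1 hfy.2]
  | succ k ih =>
    intro x hk hx1 hx2 y
    rcases eq_or_lt_of_le hx2 with hxe | hxlt
    · intro hy1 hy2
      subst hxe
      have hfy := proj_bounds n y
      rw [top_row h y hy1 hy2, proj_top n hn, top_row h' (laverProj n y) hfy.1 hfy.2]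
    · induction y with
      | zero => intro h1 _; omega
      | succ m ihm =>
        intro _ hy2
        rcases Nat.eq_zero_or_pos m with hm | hm
        · subst hm
          show laverProj n (op x (0 + 1)) = op' (laverProj n x) (laverProj n (0 + 1))
          rw [Nat.zero_add, h.2.1 x hx1 hxlt, proj_low n 1 (by omega) (by omega)]
          exact proj_succ n hn h' x hx1 hxlt
        · have e1 := step h x m hx1 hx2 hm (by omega)
          have hx1e : op x 1 = x + 1 := h.2.1 x hx1 hxlt
          have hr := h.1 x m hx1 hx2 hm (by omega)
          have hrgt : x < op x m := row_gt h x m hx1 hxlt hm (by omega)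
          have ihy := ihm hm (by omega)
          have hfx := proj_bounds n x
          have hfm := proj_bounds n m
          have hsm : laverProj n (m + 1) = op' (laverProj n m) 1 :=
            proj_succ n hn h' m hm (by omega)
          have hsx : laverProj n (x + 1) = op' (laverProj n x) 1 :=
            proj_succ n hn h' x hx1 hxlt
          have eR : op' (laverProj n x) (laverProj n (m + 1)) =
              op' (op' (laverProj n x) (laverProj n m)) (op' (laverProj n x) 1) := by
            rw [hsm]
            exact h'.2.2.2 (laverProj n x) (laverProj n m) hfx.1 hfx.2 hfm.1 hfm.2
          rw [e1, hx1e, eR, ← ihy, ← hsx]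
          rcases Nat.lt_or_ge (op x m) (2 ^ n) with hlt | hge
          · exact ih (op x m) (by omega) hr.1 hr.2 (x + 1) (by omega) (by omega)
          · have hPM : op x m = 2 ^ n := by omega
            have hfx1 := proj_bounds n (x + 1)
            rw [hPM, top_row h (x + 1) (by omega) (by omega), proj_top n hn,
              top_row h' (laverProj n (x + 1)) hfx1.1 hfx1.2]

theorem laver_hom (n : ℕ) (hn : 1 ≤ n) (op op' : ℕ → ℕ → ℕ)
    (h : IsLaverOp (2 ^ n) op) (h' : IsLaverOp (2 ^ (n - 1)) op') :
    ∀ x, 1 ≤ x → x ≤ 2 ^ n → ∀ y, 1 ≤ y → y ≤ 2 ^ n →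
      laverProj n (op x y) = op' (laverProj n x) (laverProj n y) := fun x hx1 hx2 =>
  hom_aux n hn op op' h h' (2 ^ n) x (by omega) hx1 hx2

end LaverAux

open LaverAux

/-- for `n ≥ 1`, reduction mod `2^(n−1)` is a surjective magma homomorphism
from `A_n` onto `A_{n−1}`, and for every `p`, either `π_n(p) = π_{n−1}(proj_n(p))` or
`π_n(p) = 2·π_{n−1}(proj_n(p))`. -/
theorem laver_projection (n : ℕ) (hn : 1 ≤ n) (op op' : ℕ → ℕ → ℕ)
    (h : IsLaverOp (2 ^ n) op) (h' : IsLaverOp (2 ^ (n - 1)) op') :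
    (∀ y, 1 ≤ y → y ≤ 2 ^ (n - 1) → ∃ x, 1 ≤ x ∧ x ≤ 2 ^ n ∧ laverProj n x = y) ∧
    (∀ x y, 1 ≤ x → x ≤ 2 ^ n → 1 ≤ y → y ≤ 2 ^ n →
      laverProj n (op x y) = op' (laverProj n x) (laverProj n y)) ∧
    (∀ p, 1 ≤ p → p ≤ 2 ^ n → ∀ q q',
      LeastPeriod (2 ^ n) op p q → LeastPeriod (2 ^ (n - 1)) op' (laverProj n p) q' →
      q = q' ∨ q = 2 * q') := by
  have hNN := pow_eq n hn
  have hpos : 0 < 2 ^ (n - 1) := Nat.pow_pos (by norm_num)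
  refine ⟨?_, ?_, ?_⟩
  · intro y hy1 hy2
    exact ⟨y, hy1, by omega, proj_low n y hy1 hy2⟩
  · intro x y hx1 hx2 hy1 hy2
    exact laver_hom n hn op op' h h' x hx1 hx2 y hy1 hy2
  · intro p hp1 hp2 q q' hq hq'
    obtain ⟨hq1, hqN, hqmin⟩ := hq
    obtain ⟨hq'1, hq'N, hq'min⟩ := hq'
    have hr0 := proj_bounds n p
    obtain ⟨q0, hq01, hq0M, hq0⟩ := exists_period h p hp1 hp2
    have hqle : q ≤ 2 ^ n := le_trans (hqmin q0 hq01 hq0) hq0M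
    obtain ⟨q0', h01, h0M, h0⟩ := exists_period h' (laverProj n p) hr0.1 hr0.2
    have hq'le : q' ≤ 2 ^ (n - 1) := le_trans (hq'min q0' h01 h0) h0M
    have hom := laver_hom n hn op op' h h'
    have hq'N2 : q' ≤ 2 ^ n := by omega
    -- op p q' projects to the top of A_{n-1}
    have e1 : laverProj n (op p q') = 2 ^ (n - 1) := by
      rw [hom p hp1 hp2 q' hq'1 hq'N2, proj_low n q' hq'1 hq'le, hq'N]
    have hb := h.1 p q' hp1 hp2 hq'1 hq'N2
    rcases proj_eq_top n (op p q') hn hb.1 hb.2 e1 with e2 | e2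
    · -- op p q' = 2^(n-1) : the "doubling" case
      right
      have hqne : q ≠ q' := by
        intro hqq; rw [hqq, e2] at hqN; omega
      rcases Nat.lt_or_ge (2 ^ (n - 1)) q with hqhi | hqlo
      · -- q > 2^(n-1)
        rcases eq_or_lt_of_le hq'le with hq'top | hq'lt
        · -- q' = 2^(n-1): show q = 2^n = 2q'
          have e4 : laverProj n (op p q) = 2 ^ (n - 1) := by
            rw [hqN, proj_top n hn]
          rw [hom p hp1 hp2 q hq1 hqle, proj_high n q hqhi (by omega)] at e4
          have hdvd := period_dvd h' (laverProj n p) q' hr0.1 hr0.2 hq'1 hq'N hq'min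
            (q - 2 ^ (n - 1)) (by omega) (by omega) e4
          obtain ⟨c, hc⟩ := hdvd
          have hc2 : q' * 2 ≤ q' * c ∨ c ≤ 1 := by
            rcases Nat.lt_or_ge c 2 with hcc | hcc
            · exact Or.inr (by omega)
            · exact Or.inl (Nat.mul_le_mul_left q' hcc)
          rcases hc2 with hc2 | hc2
          · omega
          · interval_cases c <;> omega
        · -- q' < 2^(n-1): impossible
          exfalso
          set N' := 2 ^ (n - 1) with hN'
          have hmono := mono h p q hp1 hp2 hq1 hqle hqN hqmin
          -- values at positions q'+1 and N'+1 coincide, contradicting monotonicity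
          have hva : laverProj n (op p (q' + 1)) = op' (laverProj n p) 1 := by
            rw [hom p hp1 hp2 (q' + 1) (by omega) (by omega),
              proj_low n (q' + 1) (by omega) (by omega),
              show q' + 1 = 1 + q' by omega,
              periodic h' (laverProj n p) q' hr0.1 hr0.2 hq'1 hq'N 1 (by omega) (by omega)]
          have hvb : laverProj n (op p (N' + 1)) = op' (laverProj n p) 1 := by
            rw [hom p hp1 hp2 (N' + 1) (by omega) (by omega),
              proj_high n (N' + 1) (by omega) (by omega)]
            congr 1
            omega
          have hlt1 : op p q' < op p (q' + 1) := hmono q' (q' + 1) hq'1 (by omega) (by omega)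
          have hlt2 : op p (q' + 1) < op p (N' + 1) :=
            hmono (q' + 1) (N' + 1) (by omega) (by omega) (by omega)
          have hba := h.1 p (q' + 1) hp1 hp2 (by omega) (by omega)
          have hbb := h.1 p (N' + 1) hp1 hp2 (by omega) (by omega)
          have hagt : N' < op p (q' + 1) := by omega
          have hbgt : N' < op p (N' + 1) := by omega
          have hea := proj_high n (op p (q' + 1)) hagt (by omega)
          have heb := proj_high n (op p (N' + 1)) hbgt (by omega)
          omega
      · -- q ≤ 2^(n-1)
        have e3 : op' (laverProj n p) q = 2 ^ (n - 1) := by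
          have hh := hom p hp1 hp2 q hq1 hqle
          rw [hqN, proj_top n hn, proj_low n q hq1 hqlo] at hh
          exact hh.symm
        have hdvd := period_dvd h' (laverProj n p) q' hr0.1 hr0.2 hq'1 hq'N hq'min
          q hq1 hqlo e3
        obtain ⟨c, hc⟩ := hdvd
        have hc2 : 2 ≤ c := by
          rcases Nat.lt_or_ge c 2 with hcc | hcc
          · interval_cases c <;> omega
          · exact hcc
        have h2q : 2 * q' ≤ q := by
          calc 2 * q' = q' * 2 := by ring
          _ ≤ q' * c := Nat.mul_le_mul_left q' hc2
          _ = q := hc.symm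
        -- op p (2q') = 2^n
        have e5 : laverProj n (op p (q' + q')) = 2 ^ (n - 1) := by
          rw [hom p hp1 hp2 (q' + q') (by omega) (by omega),
            proj_low n (q' + q') (by omega) (by omega),
            periodic h' (laverProj n p) q' hr0.1 hr0.2 hq'1 hq'N q' hq'1 (by omega), hq'N]
        have hbq := h.1 p (q' + q') hp1 hp2 (by omega) (by omega)
        have hmono := mono h p q hp1 hp2 hq1 hqle hqN hqmin q' (q' + q') hq'1
          (by omega) (by omega)
        rcases proj_eq_top n (op p (q' + q')) hn hbq.1 hbq.2 e5 with e6 | e6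
        · omega
        · have := hqmin (q' + q') (by omega) e6
          omega
    · -- op p q' = 2^n : equal periods
      left
      have hle1 : q ≤ q' := hqmin q' hq'1 e2
      have e3 : op' (laverProj n p) q = 2 ^ (n - 1) := by
        have hh := hom p hp1 hp2 q hq1 hqle
        rw [hqN, proj_top n hn, proj_low n q hq1 (by omega)] at hh
        exact hh.symm
      have hle2 : q' ≤ q := hq'min q hq1 e3
      omega
end

section
/- Let (S, ▷) be a left-cancellative LD-system and m ≥ 2. If w and w′ are m-strand braid words representing the same element of the braid group B_m, and a⃗ ∈ S^m is a sequence such that both partial colourings a⃗ · w and a⃗ · w′ are defined, then a⃗ · w = a⃗ · w′. -/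
/-!
The colouring moves `σ_i` act on `S^m` by injections (left cancellativity) that satisfy the
braid relations (self-distributivity). Garside's element `Δ²` of the positive braid monoid is
central and divisible by every `σ_i`, so it acts by an injection `D` that commutes with every
move `g` and has the form `g ∘ c`. Formally inverting `D`, i.e. passing to the direct limit of
`S^m →D S^m →D ⋯`, therefore turns every move into a bijection and yields an action of `B_m`
on a set into which `S^m` embeds. A defined partial colouring `a · w = b` says `a = w • b` there,
so `b` only depends on `a` and on the braid represented by `w`.
-/

/-- The braid relators on generators `σ_1, …, σ_k` (indexed by `Fin k`). -/
def braidRels (k : ℕ) : Set (FreeGroup (Fin k)) :=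
  { r | (∃ i j : Fin k, 2 ≤ Nat.dist (i : ℕ) (j : ℕ) ∧
          r = FreeGroup.of i * FreeGroup.of j * (FreeGroup.of j * FreeGroup.of i)⁻¹) ∨
        (∃ i j : Fin k, Nat.dist (i : ℕ) (j : ℕ) = 1 ∧
          r = FreeGroup.of i * FreeGroup.of j * FreeGroup.of i *
              (FreeGroup.of j * FreeGroup.of i * FreeGroup.of j)⁻¹) }

/-- The element of the braid group represented by a braid word, i.e. a list of letters
`σ_i` (sign `true`) or `σ_i⁻¹` (sign `false`). -/
def wordProd {k : ℕ} (w : List (Fin k × Bool)) : PresentedGroup (braidRels k) :=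
  (w.map (fun l => if l.2 then PresentedGroup.of l.1 else (PresentedGroup.of l.1)⁻¹)).prod

/-- The positive colouring move: `(a_i, a_{i+1}) ↦ (a_i ▷ a_{i+1}, a_i)`. -/
def braidMove {S : Type*} (act : S → S → S) {m : ℕ} (i : Fin (m - 1))
    (a : Fin m → S) : Fin m → S :=
  fun j =>
    if (j : ℕ) = (i : ℕ) then
      act (a ⟨(i : ℕ), by have := i.isLt; omega⟩) (a ⟨(i : ℕ) + 1, by have := i.isLt; omega⟩)
    else if (j : ℕ) = (i : ℕ) + 1 then a ⟨(i : ℕ), by have := i.isLt; omega⟩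
    else a j

/-- The negative colouring move with chosen colour `c`:
`(a_i, a_{i+1}) ↦ (a_{i+1}, c)`. -/
def negMove {S : Type*} {m : ℕ} (i : Fin (m - 1)) (c : S) (a : Fin m → S) : Fin m → S :=
  fun j =>
    if (j : ℕ) = (i : ℕ) then a ⟨(i : ℕ) + 1, by have := i.isLt; omega⟩
    else if (j : ℕ) = (i : ℕ) + 1 then c
    else a j

/-- One step of the partial colouring: for a positive letter `σ_i` apply the positive
move; for a negative letter `σ_i⁻¹` the step is defined only if there is `c` with
`a_{i+1} ▷ c = a_i`, and then `(a_i, a_{i+1})` is replaced by `(a_{i+1}, c)`. -/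
def ColourStep {S : Type*} (act : S → S → S) {m : ℕ} (l : Fin (m - 1) × Bool)
    (a b : Fin m → S) : Prop :=
  if l.2 then b = braidMove act l.1 a
  else ∃ c : S,
    act (a ⟨(l.1 : ℕ) + 1, by have := l.1.isLt; omega⟩) c =
        a ⟨(l.1 : ℕ), by have := l.1.isLt; omega⟩ ∧
    b = negMove l.1 c a

/-- `ColourRel act w a b` holds iff the partial colouring `a · w` is defined and
equals `b`. -/
def ColourRel {S : Type*} (act : S → S → S) {m : ℕ} :
    List (Fin (m - 1) × Bool) → (Fin m → S) → (Fin m → S) → Prop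
  | [], a, b => b = a
  | l :: w, a, b => ∃ a', ColourStep act l a a' ∧ ColourRel act w a' b

open Function

universe u

section Garside

variable {M : Type*} [Monoid M]

structure IsBraidFamily (n : ℕ) (s : ℕ → M) : Prop where
  commute : ∀ {i j}, i < n → j < n → 2 ≤ Nat.dist i j → Commute (s i) (s j)
  braid : ∀ {i j}, i < n → j < n → Nat.dist i j = 1 → s i * s j * s i = s j * s i * s j

def ascProd (s : ℕ → M) : ℕ → M
  | 0 => 1
  | k + 1 => ascProd s k * s k

/-- Garside's element `Δ` of the generators `s 0, …, s (k - 1)`. -/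
def halfTwist (s : ℕ → M) : ℕ → M
  | 0 => 1
  | k + 1 => ascProd s (k + 1) * halfTwist s k

variable {n : ℕ} {s : ℕ → M}

theorem exists_ascProd_eq_mul (k : ℕ) : ∃ c, ascProd s (k + 1) = s 0 * c := by
  induction k with
  | zero => exact ⟨1, by simp [ascProd]⟩
  | succ k ih =>
    obtain ⟨c, hc⟩ := ih
    exact ⟨c * s (k + 1), by rw [ascProd, hc, mul_assoc]⟩

theorem ascProd_mem_closure {k : ℕ} (hk : k ≤ n) :
    ascProd s k ∈ Submonoid.closure (s '' Set.Iio n) := by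
  induction k with
  | zero => exact one_mem _
  | succ k ih =>
    exact mul_mem (ih (by omega)) (Submonoid.subset_closure ⟨k, Set.mem_Iio.2 (by omega), rfl⟩)

theorem halfTwist_mem_closure {k : ℕ} (hk : k ≤ n) :
    halfTwist s k ∈ Submonoid.closure (s '' Set.Iio n) := by
  induction k with
  | zero => exact one_mem _
  | succ k ih => exact mul_mem (ascProd_mem_closure hk) (ih (by omega))

namespace IsBraidFamily

theorem commute_of_add_two_le (hs : IsBraidFamily n s) {i j : ℕ} (hij : i + 2 ≤ j)
    (hj : j < n) : Commute (s i) (s j) :=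
  hs.commute (by omega) hj (by simp only [Nat.dist]; omega)

theorem braid_succ (hs : IsBraidFamily n s) {i : ℕ} (hi : i + 1 < n) :
    s i * s (i + 1) * s i = s (i + 1) * s i * s (i + 1) :=
  hs.braid (by omega) hi (by simp only [Nat.dist]; omega)

theorem commute_ascProd (hs : IsBraidFamily n s) {j k : ℕ} (hkj : k + 1 ≤ j) (hj : j < n) :
    Commute (s j) (ascProd s k) := by
  induction k with
  | zero => exact Commute.one_right _
  | succ k ih => exact (ih (by omega)).mul_right (hs.commute_of_add_two_le hkj hj).symm

theorem commute_halfTwist (hs : IsBraidFamily n s) {j k : ℕ} (hkj : k + 1 ≤ j) (hj : j < n) :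
    Commute (s j) (halfTwist s k) := by
  induction k with
  | zero => exact Commute.one_right _
  | succ k ih => exact (hs.commute_ascProd hkj hj).mul_right (ih (by omega))

theorem ascProd_mul (hs : IsBraidFamily n s) {i k : ℕ} (hik : i + 1 < k) (hk : k ≤ n) :
    ascProd s k * s i = s (i + 1) * ascProd s k := by
  induction k with
  | zero => omega
  | succ k ih =>
    rcases Nat.lt_or_ge (i + 1) k with h | h
    · calc ascProd s k * s k * s i = ascProd s k * s i * s k := by
            rw [mul_assoc, (hs.commute_of_add_two_le (by omega) (by omega)).symm.eq, mul_assoc]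
        _ = s (i + 1) * (ascProd s k * s k) := by rw [ih h (by omega), mul_assoc]
    · obtain rfl : k = i + 1 := by omega
      calc ascProd s i * s i * s (i + 1) * s i = ascProd s i * (s i * s (i + 1) * s i) := by
            simp only [mul_assoc]
        _ = ascProd s i * s (i + 1) * (s i * s (i + 1)) := by
            rw [hs.braid_succ (by omega)]; simp only [mul_assoc]
        _ = s (i + 1) * (ascProd s i * s i * s (i + 1)) := by
            rw [(hs.commute_ascProd le_rfl (by omega)).symm.eq]; simp only [mul_assoc]

theorem mul_ascProd_mul (hs : IsBraidFamily n s) {k : ℕ} (hk : k + 1 < n) :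
    s (k + 1) * ascProd s (k + 1) * s (k + 1) = ascProd s (k + 2) * s k :=
  calc s (k + 1) * (ascProd s k * s k) * s (k + 1)
      = ascProd s k * (s (k + 1) * s k * s (k + 1)) := by
        rw [← mul_assoc, (hs.commute_ascProd le_rfl hk).eq]; simp only [mul_assoc]
    _ = ascProd s k * s k * s (k + 1) * s k := by
        rw [← hs.braid_succ hk]; simp only [mul_assoc]

theorem ascProd_mul_self (hs : IsBraidFamily n s) {k : ℕ} (hk : k + 1 ≤ n) :
    ascProd s (k + 1) * ascProd s (k + 1) = s 0 * ascProd s (k + 1) * ascProd s k := by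
  induction k with
  | zero => simp [ascProd]
  | succ k ih =>
    calc ascProd s (k + 1) * s (k + 1) * (ascProd s (k + 1) * s (k + 1))
        = ascProd s (k + 1) * (s (k + 1) * ascProd s (k + 1) * s (k + 1)) := by
          simp only [mul_assoc]
      _ = ascProd s (k + 1) * ascProd s (k + 1) * s (k + 1) * s k := by
          rw [hs.mul_ascProd_mul (by omega)]; simp only [ascProd, mul_assoc]
      _ = s 0 * ascProd s (k + 1) * (s (k + 1) * ascProd s k) * s k := by
          rw [ih (by omega), (hs.commute_ascProd le_rfl (by omega)).eq]; simp only [mul_assoc]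
      _ = s 0 * (ascProd s (k + 1) * s (k + 1)) * (ascProd s k * s k) := by
          simp only [mul_assoc]

theorem halfTwist_mul (hs : IsBraidFamily n s) {i k : ℕ} (hik : i < k) (hk : k ≤ n) :
    halfTwist s k * s i = s (k - 1 - i) * halfTwist s k := by
  induction k with
  | zero => omega
  | succ k ih =>
    rcases Nat.lt_or_ge i k with h | h
    · calc ascProd s (k + 1) * halfTwist s k * s i
          = ascProd s (k + 1) * s (k - 1 - i) * halfTwist s k := by
            rw [mul_assoc, ih h (by omega), mul_assoc]
        _ = s (k + 1 - 1 - i) * (ascProd s (k + 1) * halfTwist s k) := by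
            rw [hs.ascProd_mul (by omega) hk, mul_assoc]; congr 2; omega
    · obtain rfl : i = k := by omega
      rw [Nat.add_sub_cancel, Nat.sub_self]
      cases i with
      | zero => simp [halfTwist, ascProd]
      | succ k =>
        calc ascProd s (k + 2) * (ascProd s (k + 1) * halfTwist s k) * s (k + 1)
            = ascProd s (k + 2) * ascProd s (k + 2) * halfTwist s k := by
              simp only [ascProd, mul_assoc,
                (hs.commute_halfTwist (j := k + 1) le_rfl (by omega)).symm.eq]
          _ = s 0 * (ascProd s (k + 2) * (ascProd s (k + 1) * halfTwist s k)) := by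
              rw [hs.ascProd_mul_self hk]; simp only [mul_assoc]

theorem commute_halfTwist_sq (hs : IsBraidFamily n s) {i : ℕ} (hi : i < n) :
    Commute (s i) (halfTwist s n ^ 2) := by
  have hflip := hs.halfTwist_mul (show n - 1 - i < n by omega) le_rfl
  rw [show n - 1 - (n - 1 - i) = i by omega] at hflip
  calc s i * halfTwist s n ^ 2 = s i * halfTwist s n * halfTwist s n := by rw [sq, mul_assoc]
    _ = halfTwist s n * (s (n - 1 - i) * halfTwist s n) := by rw [← hflip, mul_assoc]
    _ = halfTwist s n ^ 2 * s i := by rw [← hs.halfTwist_mul hi le_rfl, sq, mul_assoc]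

theorem exists_halfTwist_eq_mul (hs : IsBraidFamily n s) {j k : ℕ} (hjk : j < k) (hk : k ≤ n) :
    ∃ c, halfTwist s k = s j * c := by
  induction k generalizing j with
  | zero => omega
  | succ k ih =>
    cases j with
    | zero =>
      obtain ⟨c, hc⟩ := exists_ascProd_eq_mul (s := s) k
      exact ⟨c * halfTwist s k, by rw [halfTwist, hc, mul_assoc]⟩
    | succ j =>
      obtain ⟨c, hc⟩ := ih (j := j) (by omega) (by omega)
      refine ⟨ascProd s (k + 1) * c, ?_⟩
      rw [halfTwist, hc, ← mul_assoc, hs.ascProd_mul (by omega) hk, mul_assoc]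

theorem exists_central_multiple (hs : IsBraidFamily n s) :
    ∃ D ∈ Submonoid.closure (s '' Set.Iio n),
      (∀ i < n, Commute (s i) D) ∧ ∀ i < n, ∃ c, D = s i * c := by
  refine ⟨halfTwist s n ^ 2, pow_mem (halfTwist_mem_closure le_rfl) 2,
    fun i hi => hs.commute_halfTwist_sq hi, fun i hi => ?_⟩
  obtain ⟨c, hc⟩ := hs.exists_halfTwist_eq_mul hi le_rfl
  exact ⟨c * halfTwist s n, by rw [sq, hc, mul_assoc]⟩

end IsBraidFamily

end Garside

section

variable {Y : Type*} {f : Y → Y}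

/-- The class of `(a, k)` stands for `f⁻ᵏ a` in the direct limit of `Y →f Y →f ⋯`. -/
def telescopeSetoid (hf : Injective f) : Setoid (Y × ℕ) where
  r p q := f^[q.2] p.1 = f^[p.2] q.1
  iseqv :=
    { refl := fun _ => rfl
      symm := Eq.symm
      trans := fun {p q r} hpq hqr => (hf.iterate q.2) <| by
        rw [← iterate_add_apply, add_comm, iterate_add_apply, hpq, ← iterate_add_apply,
          add_comm, iterate_add_apply, hqr, ← iterate_add_apply, add_comm, iterate_add_apply] }

def Telescope (hf : Injective f) : Type _ := Quotient (telescopeSetoid hf)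

namespace Telescope

variable {hf : Injective f}

def of (hf : Injective f) (a : Y) : Telescope hf := Quotient.mk _ (a, 0)

theorem of_injective : Injective (of hf) := fun _ _ h => Quotient.exact h

def map (g : Y → Y) (hg : Function.Commute g f) : Telescope hf → Telescope hf :=
  Quotient.map (Prod.map g id) fun p q (h : f^[q.2] p.1 = f^[p.2] q.1) =>
    show f^[q.2] (g p.1) = f^[p.2] (g q.1) by
      rw [← (hg.iterate_right _).eq, h, (hg.iterate_right _).eq]

theorem map_injective {g : Y → Y} (hg : Function.Commute g f) (hg' : Injective g) :
    Injective (map g hg : Telescope hf → Telescope hf) := by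
  rintro ⟨a, k⟩ ⟨b, l⟩ h
  replace h : f^[l] (g a) = f^[k] (g b) := Quotient.exact h
  refine Quotient.sound (hg' ?_)
  rwa [(hg.iterate_right _).eq, (hg.iterate_right _).eq]

theorem map_surjective {g h : Y → Y} (hg : Function.Commute g f) (hgh : g ∘ h = f) :
    Surjective (map g hg : Telescope hf → Telescope hf) := by
  rintro ⟨a, k⟩
  refine ⟨Quotient.mk _ (h a, k + 1), Quotient.sound ?_⟩
  show f^[k] (g (h a)) = f^[k + 1] a
  rw [← comp_apply (f := g), hgh, iterate_succ_apply]

noncomputable def perm {g : Y → Y} (hg : Function.Commute g f) (hg' : Injective g)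
    (hdvd : ∃ h, g ∘ h = f) : Equiv.Perm (Telescope hf) :=
  Equiv.ofBijective (map g hg) ⟨map_injective hg hg', hdvd.elim fun _ => map_surjective hg⟩

end Telescope

end

section BraidGroup

theorem lift_eq_one_of_mem_braidRels {G : Type*} [Group G] {k : ℕ} {t : Fin k → G}
    (hcomm : ∀ i j : Fin k, 2 ≤ Nat.dist i j → Commute (t i) (t j))
    (hbraid : ∀ i j : Fin k, Nat.dist i j = 1 → t i * t j * t i = t j * t i * t j) :
    ∀ r ∈ braidRels k, FreeGroup.lift t r = 1 := by
  rintro r (⟨i, j, h, rfl⟩ | ⟨i, j, h, rfl⟩)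
  · simp [(hcomm i j h).eq]
  · simp [hbraid i j h]

variable {Y : Type u} {k : ℕ} {s : ℕ → Function.End Y}

theorem IsBraidFamily.exists_injective_central_multiple (hs : IsBraidFamily k s)
    (hinj : ∀ i < k, Injective (s i)) :
    ∃ D : Function.End Y,
      Injective D ∧ (∀ i < k, Commute (s i) D) ∧ ∀ i < k, ∃ c, D = s i * c := by
  obtain ⟨D, hD_mem, hD_comm, hD_dvd⟩ := hs.exists_central_multiple
  refine ⟨D, ?_, hD_comm, hD_dvd⟩
  refine Submonoid.closure_induction (motive := fun (g : Function.End Y) _ => Injective g)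
    ?_ injective_id (fun _ _ _ _ hg hg' => hg.comp hg') hD_mem
  rintro _ ⟨i, hi, rfl⟩
  exact hinj i hi

/-- `Φ (of i)` undoes `s i`, rather than acting as `s i`, because braid words act on the right. -/
theorem exists_braidGroup_extension (hs : IsBraidFamily k s) (hinj : ∀ i < k, Injective (s i)) :
    ∃ (X : Type u) (ι : Y → X) (Φ : PresentedGroup (braidRels k) →* Equiv.Perm X),
      Injective ι ∧ ∀ (i : Fin k) a, Φ (PresentedGroup.of i) (ι (s i a)) = ι a := by
  obtain ⟨D, hD, hD_comm, hD_dvd⟩ := hs.exists_injective_central_multiple hinj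
  let t (i : Fin k) : Equiv.Perm (Telescope hD) :=
    Telescope.perm (fun a => congrFun (hD_comm i i.isLt).eq a) (hinj i i.isLt)
      ((hD_dvd i i.isLt).imp fun _ => Eq.symm)
  have ht_comm (i j : Fin k) (h : 2 ≤ Nat.dist i j) : Commute (t i) (t j) := by
    refine Equiv.ext ?_
    rintro ⟨a, l⟩
    exact congrArg (fun b => Quotient.mk _ (b, l)) (congrFun (hs.commute i.isLt j.isLt h).eq a)
  have ht_braid (i j : Fin k) (h : Nat.dist i j = 1) : t i * t j * t i = t j * t i * t j := by
    refine Equiv.ext ?_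
    rintro ⟨a, l⟩
    exact congrArg (fun b => Quotient.mk _ (b, l)) (congrFun (hs.braid i.isLt j.isLt h) a)
  refine ⟨Telescope hD, Telescope.of hD,
    PresentedGroup.toGroup (f := fun i => (t i)⁻¹) (lift_eq_one_of_mem_braidRels
      (fun i j h => (ht_comm i j h).inv_inv)
      (fun i j h => by simpa [mul_inv_rev, mul_assoc] using congrArg Inv.inv (ht_braid i j h))),
    Telescope.of_injective, fun i a => ?_⟩
  rw [PresentedGroup.toGroup.of, Equiv.Perm.inv_eq_iff_eq]
  rfl

end BraidGroup

section Colouring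

variable {S : Type u} {act : S → S → S} {m : ℕ}

theorem braidMove_injective (hcanc : ∀ x y z, act x y = act x z → y = z) (i : Fin (m - 1)) :
    Injective (braidMove act i) := by
  obtain ⟨i, hi⟩ := i
  intro a b h
  have e₀ := congrFun h ⟨i + 1, by omega⟩
  have e₁ := congrFun h ⟨i, by omega⟩
  simp only [braidMove, if_true, add_eq_left, one_ne_zero, if_false] at e₀ e₁
  rw [e₀] at e₁
  funext ⟨p, hp⟩
  have e := congrFun h ⟨p, hp⟩
  simp only [braidMove] at e
  split_ifs at e with h₁ h₂
  · subst h₁; exact e₀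
  · subst h₂; exact hcanc _ _ _ e₁
  · exact e

theorem braidMove_comm {i j : Fin (m - 1)} (h : 2 ≤ Nat.dist i j) :
    braidMove act i ∘ braidMove act j = braidMove act j ∘ braidMove act i := by
  obtain ⟨i, hi⟩ := i
  obtain ⟨j, hj⟩ := j
  simp only [Nat.dist] at h
  funext a p
  simp only [comp, braidMove]
  split_ifs <;> first | rfl | omega

theorem braidMove_braid (hLD : ∀ x y z, act x (act y z) = act (act x y) (act x z))
    {i j : Fin (m - 1)} (h : (j : ℕ) = i + 1) :
    braidMove act i ∘ braidMove act j ∘ braidMove act i =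
      braidMove act j ∘ braidMove act i ∘ braidMove act j := by
  obtain ⟨i, hi⟩ := i
  obtain ⟨j, hj⟩ := j
  obtain rfl : j = i + 1 := h
  funext a p
  simp only [comp, braidMove]
  split_ifs <;> first | rfl | omega | exact (hLD _ _ _).symm

theorem braidMove_negMove {i : Fin (m - 1)} {a : Fin m → S} {c : S}
    (hc : act (a ⟨i + 1, by omega⟩) c = a ⟨i, by omega⟩) :
    braidMove act i (negMove i c a) = a := by
  funext ⟨p, hp⟩
  simp only [braidMove, negMove]
  split_ifs <;> first | rfl | omega | (subst_vars; first | rfl | exact hc)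

def braidMoveEnd (act : S → S → S) (m k : ℕ) : Function.End (Fin m → S) :=
  if h : k < m - 1 then braidMove act ⟨k, h⟩ else 1

theorem braidMoveEnd_of_lt {k : ℕ} (hk : k < m - 1) :
    braidMoveEnd act m k = braidMove act ⟨k, hk⟩ :=
  dif_pos hk

theorem isBraidFamily_braidMoveEnd (hLD : ∀ x y z, act x (act y z) = act (act x y) (act x z)) :
    IsBraidFamily (m - 1) (braidMoveEnd act m) where
  commute {i j} hi hj h := by
    rw [braidMoveEnd_of_lt hi, braidMoveEnd_of_lt hj]
    exact braidMove_comm (i := ⟨i, hi⟩) (j := ⟨j, hj⟩) h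
  braid {i j} hi hj h := by
    rw [braidMoveEnd_of_lt hi, braidMoveEnd_of_lt hj]
    rcases (by simp only [Nat.dist] at h; omega : j = i + 1 ∨ i = j + 1) with h | h
    · exact braidMove_braid hLD (i := ⟨i, hi⟩) (j := ⟨j, hj⟩) h
    · exact (braidMove_braid hLD (i := ⟨j, hj⟩) (j := ⟨i, hi⟩) h).symm

theorem ColourStep.braidMove_eq {i : Fin (m - 1)} {a b : Fin m → S}
    (h : ColourStep act (i, false) a b) : braidMove act i b = a := by
  obtain ⟨c, hc, rfl⟩ := h
  exact braidMove_negMove hc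

theorem wordProd_cons {k : ℕ} (l : Fin k × Bool) (w : List (Fin k × Bool)) :
    wordProd (l :: w) =
      (if l.2 then PresentedGroup.of l.1 else (PresentedGroup.of l.1)⁻¹) * wordProd w := by
  simp only [wordProd, List.map_cons, List.prod_cons]

theorem ColourRel.eq_apply {X : Type*} {Φ : PresentedGroup (braidRels (m - 1)) →* Equiv.Perm X}
    {ι : (Fin m → S) → X}
    (hΦ : ∀ i a, Φ (PresentedGroup.of i) (ι (braidMove act i a)) = ι a)
    {w : List (Fin (m - 1) × Bool)} {a b : Fin m → S} (h : ColourRel act w a b) :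
    ι a = Φ (wordProd w) (ι b) := by
  induction w generalizing a with
  | nil => obtain rfl : b = a := h; simp [wordProd]
  | cons l w ih =>
    obtain ⟨a', hstep, hrest⟩ := h
    obtain ⟨i, _ | _⟩ := l
    · simp only [wordProd_cons, Bool.false_eq_true, if_false, map_mul, map_inv,
        Equiv.Perm.mul_apply]
      rw [← ih hrest, Equiv.Perm.eq_inv_iff_eq, ← hstep.braidMove_eq, hΦ]
    · obtain rfl : a' = braidMove act i a := hstep
      simp only [wordProd_cons, if_true, map_mul, Equiv.Perm.mul_apply]
      rw [← ih hrest, hΦ]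

end Colouring

theorem partial_colouring_invariance_general {S : Type*} (act : S → S → S)
    (hLD : ∀ x y z, act x (act y z) = act (act x y) (act x z))
    (hcanc : ∀ x y z, act x y = act x z → y = z)
    (m : ℕ)
    (w w' : List (Fin (m - 1) × Bool)) (hww : wordProd w = wordProd w')
    (a b b' : Fin m → S) (hb : ColourRel act w a b) (hb' : ColourRel act w' a b') :
    b = b' := by
  obtain ⟨X, ι, Φ, hι, hΦ⟩ :=
    exists_braidGroup_extension (isBraidFamily_braidMoveEnd (m := m) hLD) fun k hk =>
      braidMoveEnd_of_lt hk ▸ braidMove_injective hcanc _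
  replace hΦ i a : Φ (PresentedGroup.of i) (ι (braidMove act i a)) = ι a := by
    simpa only [braidMoveEnd_of_lt i.isLt] using hΦ i a
  have h := (hb.eq_apply hΦ).symm.trans (hb'.eq_apply hΦ)
  rw [hww] at h
  exact hι ((Φ (wordProd w')).injective h)

/-- over a left-cancellative LD-system, if two braid words represent the
same braid and both partial colourings from `a` are defined, then they coincide. -/
theorem partial_colouring_invariance {S : Type*} (act : S → S → S)
    (hLD : ∀ x y z, act x (act y z) = act (act x y) (act x z))
    (hcanc : ∀ x y z, act x y = act x z → y = z)
    (m : ℕ) (hm : 2 ≤ m)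
    (w w' : List (Fin (m - 1) × Bool)) (hww : wordProd w = wordProd w')
    (a b b' : Fin m → S) (hb : ColourRel act w a b) (hb' : ColourRel act w' a b') :
    b = b' :=
  partial_colouring_invariance_general act hLD hcanc m w w' hww a b b' hb hb'
end

section
/- Let (S, ▷) be an LD-system. With C_k(S) the free ℤ-module on S^k (and C_0(S) = ℤ), and with the boundary maps ∂^▷_k and ∂^0_k defined below, one has, for every k ≥ 2: ∂^▷_{k−1} ∘ ∂^▷_k = 0, ∂^0_{k−1} ∘ ∂^0_k = 0, and ∂^▷_{k−1} ∘ ∂^0_k + ∂^0_{k−1} ∘ ∂^▷_k = 0; consequently, for any integers a, b, the maps ∂_k = a·∂^▷_k + b·∂^0_k satisfy ∂_{k−1} ∘ ∂_k = 0. -/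
/-- The `i`-th face map (0-indexed): omit the `i`-th entry and act by `x_i` on all
later entries. With `act x y = x ▷ y` this is `d^▷`; with `act x y = y` it is `d^0`. -/
def laverFace {S : Type*} (act : S → S → S) {k : ℕ} (i : Fin (k + 1))
    (x : Fin (k + 1) → S) : Fin k → S :=
  fun j => if (j : ℕ) < (i : ℕ) then x j.castSucc else act (x i) (x j.succ)

/-- The boundary operator `∂ = Σ_{i} (−1)^i d_{i}` on the free ℤ-module on `S^{k+1}`
(with the free ℤ-module on `S^0 = Fin 0 → S` serving as `C_0 ≅ ℤ`). -/
noncomputable def bdry {S : Type*} (act : S → S → S) (k : ℕ) :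
    ((Fin (k + 1) → S) →₀ ℤ) →ₗ[ℤ] ((Fin k → S) →₀ ℤ) :=
  ∑ i : Fin (k + 1), ((-1 : ℤ) ^ (i : ℕ)) • Finsupp.lmapDomain ℤ ℤ (laverFace act i)

lemma face_comm {S : Type*} (act1 act2 : S → S → S)
    (hc : ∀ a b c, act1 a (act2 b c) = act2 (act1 a b) (act1 a c)) {k : ℕ}
    (i : Fin (k + 1)) (j : Fin (k + 2)) (h : (i : ℕ) < (j : ℕ)) :
    laverFace act1 i ∘ laverFace act2 j =
      laverFace act2 ⟨(j : ℕ) - 1, by omega⟩ ∘ laverFace act1 i.castSucc := by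
  funext x n
  simp only [Function.comp_apply, laverFace, Fin.coe_castSucc, Fin.val_succ]
  split_ifs <;> first
    | omega
    | rfl
    | simp [Fin.succ_castSucc]
    | skip
  have hx : x ⟨(j : ℕ) - 1 + 1, by omega⟩ = x j := congrArg x (Fin.ext (by simp; omega))
  rw [hx]
  exact hc _ _ _

/-- The composite face term. -/
noncomputable def dd {S : Type*} (act1 act2 : S → S → S) (k : ℕ)
    (p : Fin (k + 1) × Fin (k + 2)) :
    ((Fin (k + 2) → S) →₀ ℤ) →ₗ[ℤ] ((Fin k → S) →₀ ℤ) :=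
  ((-1 : ℤ) ^ ((p.1 : ℕ) + (p.2 : ℕ))) •
    Finsupp.lmapDomain ℤ ℤ (laverFace act1 p.1 ∘ laverFace act2 p.2)

lemma lm_sum_comp {M N P : Type*} [AddCommMonoid M] [AddCommMonoid N] [AddCommMonoid P]
    [Module ℤ M] [Module ℤ N] [Module ℤ P] {ι : Type*} (s : Finset ι)
    (f : ι → (N →ₗ[ℤ] P)) (g : M →ₗ[ℤ] N) :
    (∑ i ∈ s, f i).comp g = ∑ i ∈ s, (f i).comp g :=
  LinearMap.ext fun x => by simp [LinearMap.sum_apply]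

lemma lm_comp_sum {M N P : Type*} [AddCommMonoid M] [AddCommMonoid N] [AddCommMonoid P]
    [Module ℤ M] [Module ℤ N] [Module ℤ P] {ι : Type*} (s : Finset ι)
    (f : N →ₗ[ℤ] P) (g : ι → (M →ₗ[ℤ] N)) :
    f.comp (∑ i ∈ s, g i) = ∑ i ∈ s, f.comp (g i) :=
  LinearMap.ext fun x => by simp [LinearMap.sum_apply]

lemma bdry_comp {S : Type*} (act1 act2 : S → S → S) (k : ℕ) :
    (bdry act1 k).comp (bdry act2 (k + 1)) =
      ∑ p : Fin (k + 1) × Fin (k + 2), dd act1 act2 k p := by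
  rw [bdry, bdry, lm_sum_comp, Fintype.sum_prod_type]
  refine Finset.sum_congr rfl fun i _ => ?_
  rw [LinearMap.smul_comp, lm_comp_sum]
  rw [Finset.smul_sum]
  refine Finset.sum_congr rfl fun j _ => ?_
  rw [LinearMap.comp_smul, dd, ← Finsupp.lmapDomain_comp, smul_smul, ← pow_add]

lemma sum_split {S : Type*} (act1 act2 : S → S → S)
    (hc : ∀ a b c, act1 a (act2 b c) = act2 (act1 a b) (act1 a c)) (k : ℕ) :
    ∑ p ∈ Finset.univ.filter (fun p : Fin (k + 1) × Fin (k + 2) => (p.1 : ℕ) < (p.2 : ℕ)),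
        dd act1 act2 k p =
      - ∑ p ∈ Finset.univ.filter
          (fun p : Fin (k + 1) × Fin (k + 2) => ¬ (p.1 : ℕ) < (p.2 : ℕ)),
        dd act2 act1 k p := by
  rw [← Finset.sum_neg_distrib]
  refine Finset.sum_bij' (i := fun p hp => (⟨(p.2 : ℕ) - 1, by omega⟩, p.1.castSucc))
    (j := fun p hp => (⟨(p.2 : ℕ), by
      simp only [Finset.mem_filter, Finset.mem_univ, true_and, not_lt] at hp
      omega⟩, p.1.succ)) ?_ ?_ ?_ ?_ ?_
  · intro p hp
    simp only [Finset.mem_filter, Finset.mem_univ, true_and, not_lt] at hp ⊢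
    simp only [Fin.coe_castSucc]
    omega
  · intro p hp
    simp only [Finset.mem_filter, Finset.mem_univ, true_and, not_lt] at hp ⊢
    simp only [Fin.val_succ]
    omega
  · intro p hp
    simp only [Finset.mem_filter, Finset.mem_univ, true_and] at hp
    ext <;> simp <;> omega
  · intro p hp
    simp only [Finset.mem_filter, Finset.mem_univ, true_and, not_lt] at hp
    ext <;> simp <;> omega
  · intro p hp
    simp only [Finset.mem_filter, Finset.mem_univ, true_and] at hp
    obtain ⟨i, j⟩ := p
    simp only at hp ⊢
    rw [dd, dd, face_comm act1 act2 hc i j hp]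
    simp only [Fin.coe_castSucc]
    have hsign : ((i : ℕ) + (j : ℕ)) = ((j : ℕ) - 1 + (i : ℕ)) + 1 := by omega
    rw [hsign, pow_succ, mul_comm, neg_one_mul, neg_smul]

lemma bdry_anticomm {S : Type*} (act1 act2 : S → S → S)
    (h12 : ∀ a b c, act1 a (act2 b c) = act2 (act1 a b) (act1 a c))
    (h21 : ∀ a b c, act2 a (act1 b c) = act1 (act2 a b) (act2 a c)) (k : ℕ) :
    (bdry act1 k).comp (bdry act2 (k + 1)) + (bdry act2 k).comp (bdry act1 (k + 1)) = 0 := by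
  rw [bdry_comp, bdry_comp]
  rw [← Finset.sum_filter_add_sum_filter_not Finset.univ
    (fun p : Fin (k + 1) × Fin (k + 2) => (p.1 : ℕ) < (p.2 : ℕ)) (dd act1 act2 k)]
  rw [← Finset.sum_filter_add_sum_filter_not Finset.univ
    (fun p : Fin (k + 1) × Fin (k + 2) => (p.1 : ℕ) < (p.2 : ℕ)) (dd act2 act1 k)]
  rw [sum_split act1 act2 h12, sum_split act2 act1 h21]
  abel

lemma bdry_sq {S : Type*} (act : S → S → S)
    (h : ∀ a b c, act a (act b c) = act (act a b) (act a c)) (k : ℕ) :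
    (bdry act k).comp (bdry act (k + 1)) = 0 := by
  rw [bdry_comp]
  rw [← Finset.sum_filter_add_sum_filter_not Finset.univ
    (fun p : Fin (k + 1) × Fin (k + 2) => (p.1 : ℕ) < (p.2 : ℕ)) (dd act act k)]
  rw [sum_split act act h]
  abel

/-- for an LD-system `(S, ▷)`, the boundary maps `∂^▷` and `∂^0` satisfy
`∂^▷∘∂^▷ = 0`, `∂^0∘∂^0 = 0`, `∂^▷∘∂^0 + ∂^0∘∂^▷ = 0`; consequently every
ℤ-linear combination `∂ = a·∂^▷ + b·∂^0` satisfies `∂∘∂ = 0`. -/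
theorem shelf_chain_bicomplex {S : Type*} (act : S → S → S)
    (hLD : ∀ x y z, act x (act y z) = act (act x y) (act x z)) :
    (∀ k, (bdry act k).comp (bdry act (k + 1)) = 0) ∧
    (∀ k, (bdry (fun (_ y : S) => y) k).comp (bdry (fun (_ y : S) => y) (k + 1)) = 0) ∧
    (∀ k, (bdry act k).comp (bdry (fun (_ y : S) => y) (k + 1)) +
        (bdry (fun (_ y : S) => y) k).comp (bdry act (k + 1)) = 0) ∧
    (∀ a b : ℤ, ∀ k,
      (a • bdry act k + b • bdry (fun (_ y : S) => y) k).comp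
        (a • bdry act (k + 1) + b • bdry (fun (_ y : S) => y) (k + 1)) = 0) := by
  have hAA := bdry_sq act hLD
  have hBB := bdry_sq (fun (_ y : S) => y) (fun _ _ _ => rfl)
  have hAB := bdry_anticomm act (fun (_ y : S) => y) (fun _ _ _ => rfl) (fun _ _ _ => rfl)
  refine ⟨hAA, hBB, hAB, fun a b k => ?_⟩
  simp only [LinearMap.add_comp, LinearMap.comp_add, LinearMap.smul_comp, LinearMap.comp_smul,
    hAA k, hBB k, smul_zero]
  rw [zero_add, add_zero, smul_smul, smul_smul, mul_comm b a, ← smul_add,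
    add_comm ((bdry (fun (_ y : S) => y) k).comp (bdry act (k + 1))), hAB k, smul_zero]
end

section
/- For every n ≥ 0, the one-term distributive chain complex (C_k(A_n), ∂^▷_k) of the n-th Laver table A_n is acyclic: the map ∂^▷_1 : C_1(A_n) → ℤ is surjective and, for every k ≥ 1, the kernel of ∂^▷_k equals the image of ∂^▷_{k+1}; hence all homology groups of this complex are trivial. -/
/-- The underlying set `{1, …, 2^n}` of the `n`-th Laver table. -/
abbrev LaverSet (n : ℕ) := {p : ℕ // 1 ≤ p ∧ p ≤ 2 ^ n}

theorem sum_sum_neg_one_pow_smul_eq_zero {M : Type*} [AddCommGroup M] {k : ℕ}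
    (f : Fin (k + 2) → Fin (k + 1) → M)
    (hf : ∀ i j : Fin (k + 1), i ≤ j → f j.succ i = f i.castSucc j) :
    ∑ j : Fin (k + 2), ∑ i : Fin (k + 1), ((-1 : ℤ) ^ (j : ℕ) * (-1) ^ (i : ℕ)) • f j i
      = 0 := by
  rw [← Finset.sum_product', Finset.univ_product_univ]
  -- the terms at `(j, i)` and `(i + 1, j)`, for `j ≤ i`, cancel
  refine Finset.sum_involution
    (fun p _ => if h : (p.1 : ℕ) ≤ p.2 then (p.2.succ, p.1.castLT (by omega))
      else (p.2.castSucc, p.1.pred fun h0 => h (by simp [h0])))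
    ?_ ?_ (fun _ _ => Finset.mem_univ _) ?_
  · rintro ⟨j, i⟩ -
    dsimp only
    split_ifs with h
    · rw [hf _ _ (Fin.le_def.mpr h), Fin.castSucc_castLT, ← add_smul, Fin.val_succ,
        Fin.val_castLT, pow_succ]
      simp [mul_comm]
    · rw [← hf _ _ (Fin.le_def.mpr (by simp; omega)), Fin.succ_pred, ← add_smul,
        Fin.val_castSucc, Fin.val_pred]
      obtain ⟨j', hj'⟩ : ∃ j', (j : ℕ) = j' + 1 := ⟨j - 1, by omega⟩
      rw [hj', Nat.add_sub_cancel, pow_succ]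
      simp [mul_comm]
  · rintro ⟨j, i⟩ - -
    dsimp only
    split_ifs with h <;> simp [Prod.ext_iff, Fin.ext_iff] <;> omega
  · rintro ⟨j, i⟩ -
    dsimp only
    by_cases h : (j : ℕ) ≤ i
    · rw [dif_pos h, dif_neg (by simp; omega)]
      ext <;> simp
    · rw [dif_neg h, dif_pos (by simp; omega)]
      ext <;> simp

section OneTermComplex

variable {S : Type*} (act : S → S → S)

theorem laverFace_laverFace (hLD : ∀ a b c, act a (act b c) = act (act a b) (act a c)) {k : ℕ}
    {i j : Fin (k + 1)} (hij : i ≤ j) (x : Fin (k + 2) → S) :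
    laverFace act i (laverFace act j.succ x) = laverFace act j (laverFace act i.castSucc x) := by
  rw [Fin.le_def] at hij
  funext m
  simp only [laverFace, Fin.val_castSucc, Fin.val_succ, Fin.succ_castSucc]
  split_ifs <;> first | rfl | omega | exact hLD _ _ _

theorem laverFace_zero_cons {e : S} (he : ∀ y, act e y = y) {k : ℕ} (x : Fin k → S) :
    laverFace act 0 (Fin.cons e x : Fin (k + 1) → S) = x := by
  funext j
  simp [laverFace, he]

theorem laverFace_succ_cons (e : S) {k : ℕ} (i : Fin (k + 1)) (x : Fin (k + 1) → S) :
    laverFace act i.succ (Fin.cons e x) = Fin.cons e (laverFace act i x) := by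
  funext j
  cases j using Fin.cases with
  | zero => simp [laverFace]
  | succ j => simp [laverFace]

theorem bdry_single {k : ℕ} (x : Fin (k + 1) → S) (c : ℤ) :
    bdry act k (Finsupp.single x c)
      = ∑ i : Fin (k + 1), ((-1 : ℤ) ^ (i : ℕ)) • Finsupp.single (laverFace act i x) c := by
  simp [bdry, LinearMap.sum_apply]

theorem bdry_comp_bdry (hLD : ∀ a b c, act a (act b c) = act (act a b) (act a c)) (k : ℕ) :
    bdry act k ∘ₗ bdry act (k + 1) = 0 := by
  refine Finsupp.lhom_ext fun x c => ?_
  simp only [LinearMap.comp_apply, LinearMap.zero_apply, bdry_single, map_sum, map_zsmul,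
    Finset.smul_sum, smul_smul]
  exact sum_sum_neg_one_pow_smul_eq_zero _ fun i j hij => by rw [laverFace_laverFace act hLD hij]

noncomputable def consMap (e : S) (k : ℕ) :
    ((Fin k → S) →₀ ℤ) →ₗ[ℤ] ((Fin (k + 1) → S) →₀ ℤ) :=
  Finsupp.lmapDomain ℤ ℤ fun x => (Fin.cons e x : Fin (k + 1) → S)

theorem bdry_zero_comp_consMap (e : S) : bdry act 0 ∘ₗ consMap e 0 = LinearMap.id := by
  refine Finsupp.lhom_ext fun x c => ?_
  simp [consMap, bdry_single, Subsingleton.elim _ x]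

theorem bdry_comp_consMap_add_consMap_comp_bdry {e : S} (he : ∀ y, act e y = y) (k : ℕ) :
    bdry act (k + 1) ∘ₗ consMap e (k + 1) + consMap e k ∘ₗ bdry act k = LinearMap.id := by
  refine Finsupp.lhom_ext fun x c => ?_
  simp only [LinearMap.add_apply, LinearMap.comp_apply, LinearMap.id_apply, consMap,
    Finsupp.lmapDomain_apply, Finsupp.mapDomain_single, bdry_single, map_sum, map_zsmul,
    Fin.sum_univ_succ (n := k + 1), laverFace_zero_cons act he, laverFace_succ_cons, Fin.val_zero,
    pow_zero, one_smul, Fin.val_succ, pow_succ, mul_neg_one, neg_smul, Finset.sum_neg_distrib]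
  abel

theorem bdry_zero_surjective_and_ker_eq_range (e : S) (he : ∀ y, act e y = y)
    (hLD : ∀ a b c, act a (act b c) = act (act a b) (act a c)) :
    Function.Surjective (bdry act 0) ∧
      ∀ k, LinearMap.ker (bdry act k) = LinearMap.range (bdry act (k + 1)) := by
  refine ⟨fun y => ⟨consMap e 0 y, LinearMap.congr_fun (bdry_zero_comp_consMap act e) y⟩,
    fun k => le_antisymm (fun z hz => ⟨consMap e (k + 1) z, ?_⟩)
      (LinearMap.range_le_ker_iff.mpr (bdry_comp_bdry act hLD k))⟩
  have := LinearMap.congr_fun (bdry_comp_consMap_add_consMap_comp_bdry act he k) z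
  rwa [LinearMap.add_apply, LinearMap.comp_apply, LinearMap.comp_apply, LinearMap.mem_ker.mp hz,
    map_zero, add_zero] at this

end OneTermComplex

/-- The table on `{1, …, N}` given by the Laver recursion, for any `N`. The guard
`p < laverTab N p (q - 1)` always holds (`laverTab_mem_Ioc`); it only makes the recursion on
`(N - p, q)` visibly well founded. Column `0` is junk. -/
def laverTab (N p q : ℕ) : ℕ :=
  if N ≤ p then q
  else if q ≤ 1 then p + 1
  else if p < laverTab N p (q - 1) then laverTab N (laverTab N p (q - 1)) (p + 1) else 0
termination_by (N - p, q)

section LaverTab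

variable {N p q : ℕ}

theorem laverTab_of_le (h : N ≤ p) (q : ℕ) : laverTab N p q = q := by
  rw [laverTab, if_pos h]

theorem laverTab_one (h : p < N) : laverTab N p 1 = p + 1 := by
  rw [laverTab, if_neg (by omega), if_pos le_rfl]

theorem laverTab_mem_Ioc {p : ℕ} (h : p < N) (q : ℕ) : laverTab N p q ∈ Set.Ioc p N := by
  rw [laverTab, if_neg (by omega)]
  split_ifs with hq hu
  · exact ⟨by omega, h⟩
  · obtain ⟨-, hle⟩ := laverTab_mem_Ioc h (q - 1)
    rcases hle.eq_or_lt with heq | hlt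
    · rw [heq, laverTab_of_le le_rfl]; exact ⟨by omega, h⟩
    · obtain ⟨hlt', hle'⟩ := laverTab_mem_Ioc hlt (p + 1)
      exact ⟨hu.trans hlt', hle'⟩
  · exact absurd (laverTab_mem_Ioc h (q - 1)).1 hu
termination_by (N - p, q)

theorem lt_laverTab (h : p < N) (q : ℕ) : p < laverTab N p q := (laverTab_mem_Ioc h q).1

theorem laverTab_le (h : p < N) (q : ℕ) : laverTab N p q ≤ N := (laverTab_mem_Ioc h q).2

theorem laverTab_le_of_le (hp : p ≤ N) (hq : q ≤ N) : laverTab N p q ≤ N := by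
  rcases hp.eq_or_lt with rfl | h
  · rwa [laverTab_of_le le_rfl]
  · exact laverTab_le h q

theorem one_le_laverTab (hq : 1 ≤ q) : 1 ≤ laverTab N p q := by
  by_cases h : N ≤ p
  · rwa [laverTab_of_le h]
  · have := lt_laverTab (not_le.mp h) q
    omega

theorem laverTab_succ (h : p < N) (hq : 1 ≤ q) :
    laverTab N p (q + 1) = laverTab N (laverTab N p q) (p + 1) := by
  rw [laverTab, if_neg (by omega), if_neg (by omega), Nat.add_sub_cancel,
    if_pos (lt_laverTab h q)]

theorem laverTab_add_of_eq (h : p < N) {c : ℕ} (hc : laverTab N p c = N) {s : ℕ}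
    (hs : 1 ≤ s) : laverTab N p (c + s) = laverTab N p s := by
  induction s, hs using Nat.le_induction with
  | base =>
    rcases Nat.eq_zero_or_pos c with rfl | hc0
    · rfl
    · rw [laverTab_succ h hc0, hc, laverTab_of_le le_rfl, laverTab_one h]
  | succ s hs ih =>
    rw [← add_assoc, laverTab_succ h (by omega), ih, laverTab_succ h hs]

theorem laverTab_of_dvd (h : p < N) {c d : ℕ} (hc : laverTab N p c = N) (hcd : c ∣ d)
    (hd : 0 < d) : laverTab N p d = N := by
  obtain ⟨k, rfl⟩ := hcd
  have hc0 : 0 < c := Nat.pos_of_mul_pos_right hd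
  induction k with
  | zero => simp at hd
  | succ k ih =>
    rcases Nat.eq_zero_or_pos k with rfl | hk
    · simpa using hc
    · rw [mul_add_one, laverTab_add_of_eq h (ih (by positivity)) hc0, hc]

theorem dvd_of_laverTab_eq (h : p < N) {c : ℕ} (hc0 : 0 < c) (hc : laverTab N p c = N)
    (hmin : ∀ s, 0 < s → s < c → laverTab N p s ≠ N) {q : ℕ} (hq0 : 0 < q)
    (hq : laverTab N p q = N) : c ∣ q := by
  rcases lt_trichotomy q c with hlt | rfl | hgt
  · exact absurd hq (hmin q hq0 hlt)
  · exact dvd_rfl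
  · have hsub : laverTab N p (q - c) = N := by
      rwa [← laverTab_add_of_eq h hc (by omega), Nat.add_sub_cancel' hgt.le]
    have := dvd_of_laverTab_eq h hc0 hc hmin (by omega) hsub
    simpa [Nat.sub_add_cancel hgt.le] using Nat.dvd_add this (dvd_refl c)
termination_by q

theorem laverTab_self_distrib_one (hend : ∀ p, 1 ≤ p → p ≤ N → laverTab N p N = N)
    (hp : 1 ≤ p) (hpN : p ≤ N) (hq : 1 ≤ q) (hqN : q ≤ N) :
    laverTab N p (laverTab N q 1) = laverTab N (laverTab N p q) (laverTab N p 1) := by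
  rcases hpN.eq_or_lt with rfl | hpN
  · simp only [laverTab_of_le le_rfl]
  rcases hqN.eq_or_lt with rfl | hqN
  · rw [laverTab_of_le le_rfl, hend p hp hpN.le, laverTab_of_le le_rfl]
  · rw [laverTab_one hqN, laverTab_one hpN, laverTab_succ hpN hq]

theorem laverTab_self_distrib (hend : ∀ p, 1 ≤ p → p ≤ N → laverTab N p N = N)
    {p q r : ℕ} (hp : 1 ≤ p) (hpN : p ≤ N) (hq : 1 ≤ q) (hqN : q ≤ N) (hr : 1 ≤ r)
    (hrN : r ≤ N) :
    laverTab N p (laverTab N q r) = laverTab N (laverTab N p q) (laverTab N p r) := by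
  rcases hpN.eq_or_lt with rfl | hpN
  · simp only [laverTab_of_le le_rfl]
  rcases hqN.eq_or_lt with rfl | hqN
  · rw [laverTab_of_le le_rfl, hend p hp hpN.le, laverTab_of_le le_rfl]
  rcases hr.eq_or_lt with rfl | hr
  · exact laverTab_self_distrib_one hend hp hpN.le hq hqN.le
  obtain ⟨r', hr'⟩ : ∃ r', r = r' + 1 := ⟨r - 1, by omega⟩
  rw [hr']
  obtain ⟨hqr, hqrN⟩ := laverTab_mem_Ioc hqN r'
  obtain ⟨hpq, hpqN⟩ := laverTab_mem_Ioc hpN q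
  obtain ⟨hpr, hprN⟩ := laverTab_mem_Ioc hpN r'
  calc laverTab N p (laverTab N q (r' + 1))
      = laverTab N p (laverTab N (laverTab N q r') (laverTab N q 1)) := by
        rw [laverTab_one hqN, laverTab_succ hqN (by omega)]
    _ = laverTab N (laverTab N p (laverTab N q r')) (laverTab N p (laverTab N q 1)) :=
        laverTab_self_distrib hend hp hpN.le (by omega) hqrN (one_le_laverTab le_rfl)
          (laverTab_le_of_le hqN.le (by omega))
    _ = laverTab N (laverTab N (laverTab N p q) (laverTab N p r'))
          (laverTab N (laverTab N p q) (laverTab N p 1)) := by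
        rw [laverTab_self_distrib hend hp hpN.le hq hqN.le (by omega) (by omega),
          laverTab_self_distrib_one hend hp hpN.le hq hqN.le]
    _ = laverTab N (laverTab N p q) (laverTab N (laverTab N p r') (laverTab N p 1)) :=
        (laverTab_self_distrib hend (by omega) hpqN (by omega) hprN (one_le_laverTab le_rfl)
          (laverTab_le_of_le hpN.le (by omega))).symm
    _ = laverTab N (laverTab N p q) (laverTab N p (r' + 1)) := by
        rw [laverTab_one hpN, laverTab_succ hpN (by omega)]
termination_by (N - p, N - q, r)
decreasing_by all_goals (simp only [Prod.lex_def, true_and]; omega)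

end LaverTab

section Doubling

/-- `x' ∈ {1, …, M}` is the residue of `x ∈ {1, …, 2M}` modulo `M`: the projection
`A_{n+1} → A_n` for `M = 2^n`. -/
def ReducesTo (M x x' : ℕ) : Prop := 1 ≤ x' ∧ x' ≤ M ∧ (x = x' ∨ x = x' + M)

variable {M : ℕ}

theorem exists_reducesTo {x : ℕ} (hx : 1 ≤ x) (hxM : x ≤ 2 * M) :
    ∃ x', ReducesTo M x x' := by
  rcases le_or_gt x M with h | h
  · exact ⟨x, hx, h, .inl rfl⟩
  · exact ⟨x - M, by omega, by omega, .inr (by omega)⟩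

theorem ReducesTo.unique {x a b : ℕ} (ha : ReducesTo M x a) (hb : ReducesTo M x b) : a = b := by
  unfold ReducesTo at ha hb
  omega

theorem ReducesTo.succ {p p' : ℕ} (h : ReducesTo M p p') (hp : p < 2 * M) :
    ReducesTo M (p + 1) (laverTab M p' 1) := by
  obtain ⟨h1, h2, h3⟩ := h
  rcases h2.eq_or_lt with rfl | h2
  · rw [laverTab_of_le le_rfl]; exact ⟨le_rfl, h1, .inr (by omega)⟩
  · rw [laverTab_one h2]; exact ⟨by omega, h2, by omega⟩

variable (hend : ∀ p, 1 ≤ p → p ≤ M → laverTab M p M = M)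
include hend

theorem ReducesTo.laverTab_two_mul {p q p' q' : ℕ} (hp : ReducesTo M p p')
    (hq : ReducesTo M q q') : ReducesTo M (laverTab (2 * M) p q) (laverTab M p' q') := by
  have hbounds := And.intro hp hq
  unfold ReducesTo at hbounds
  rcases (show p ≤ 2 * M by omega).eq_or_lt with rfl | hp2M
  · obtain rfl : p' = M := by omega
    rwa [laverTab_of_le le_rfl, laverTab_of_le le_rfl]
  obtain rfl | ⟨q₀, rfl, hq₀⟩ : q = 1 ∨ ∃ q₀, q = q₀ + 1 ∧ 1 ≤ q₀ :=
    (show 1 ≤ q by omega).eq_or_lt.imp Eq.symm fun h => ⟨q - 1, by omega, by omega⟩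
  · obtain rfl : q' = 1 := by omega
    rw [laverTab_one hp2M]
    exact hp.succ hp2M
  obtain ⟨q₀', hq₀'⟩ := exists_reducesTo (M := M) hq₀ (by omega)
  obtain rfl : laverTab M q₀' 1 = q' := (hq₀'.succ (by omega)).unique hq
  have hu := ReducesTo.laverTab_two_mul hp hq₀'
  obtain ⟨hpu, -⟩ := laverTab_mem_Ioc hp2M q₀
  rw [laverTab_succ hp2M hq₀, laverTab_self_distrib_one hend hp.1 hp.2.1 hq₀'.1 hq₀'.2.1]
  exact ReducesTo.laverTab_two_mul hu (hp.succ hp2M)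
termination_by (2 * M - p, q)

theorem laverTab_two_mul_of_lt {p q q' : ℕ} (hMp : M < p) (hp : p < 2 * M)
    (hq : ReducesTo M q q') : laverTab (2 * M) p q = M + laverTab M (p - M) q' := by
  have hred := ReducesTo.laverTab_two_mul hend (p := p) (p' := p - M)
    ⟨by omega, by omega, .inr (by omega)⟩ hq
  have := lt_laverTab hp q
  unfold ReducesTo at hred
  omega

theorem laverTab_two_mul_self_left {q : ℕ} (hq : 1 ≤ q) (hqM : q ≤ M) :
    laverTab (2 * M) M q = M + q := by
  induction q, hq using Nat.le_induction with
  | base => rw [laverTab_one (by omega)]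
  | succ q hq ih =>
    rw [laverTab_succ (by omega) hq, ih (by omega),
      laverTab_two_mul_of_lt hend (by omega) (by omega) (q' := 1)
        ⟨le_rfl, by omega, .inr (by omega)⟩,
      Nat.add_sub_cancel_left, laverTab_one (by omega)]

theorem laverTab_two_mul_add {p c s : ℕ} (hp : 1 ≤ p) (hpM : p < M) (hc : 1 ≤ c)
    (hpc : laverTab (2 * M) p c = M) (hs : 1 ≤ s)
    (hlt : ∀ t, 1 ≤ t → t < s → laverTab M p t < M) :
    laverTab (2 * M) p (c + s) = M + laverTab M p s := by
  induction s, hs using Nat.le_induction with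
  | base =>
    rw [laverTab_succ (by omega) hc, hpc, laverTab_two_mul_self_left hend (by omega) hpM,
      laverTab_one hpM]
  | succ s hs ih =>
    have hps := lt_laverTab hpM s
    have hsM := hlt s hs (by omega)
    rw [← add_assoc, laverTab_succ (by omega) (by omega), ih fun t ht hts => hlt t ht (by omega),
      laverTab_two_mul_of_lt hend (by omega) (by omega) (q' := p + 1) ⟨by omega, hpM, .inl rfl⟩,
      Nat.add_sub_cancel_left, laverTab_succ hpM hs]

theorem laverTab_two_mul_apply_self_of_lt {p : ℕ} (hp : 1 ≤ p) (hpM : p < M) :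
    laverTab (2 * M) p (2 * M) = 2 * M := by
  classical
  have hex : ∃ c, 0 < c ∧ laverTab M p c = M := ⟨M, by omega, hend p hp hpM.le⟩
  obtain ⟨hc0, hc⟩ := Nat.find_spec hex
  have hmin : ∀ t, 0 < t → t < Nat.find hex → laverTab M p t < M := fun t ht htc =>
    (laverTab_le hpM t).lt_of_ne fun h => Nat.find_min hex htc ⟨ht, h⟩
  have hcM : Nat.find hex ∣ M :=
    dvd_of_laverTab_eq hpM hc0 hc (fun t ht htc => (hmin t ht htc).ne) (by omega)
      (hend p hp hpM.le)
  have hred := ReducesTo.laverTab_two_mul hend (p := p) (q := Nat.find hex)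
    ⟨hp, hpM.le, .inl rfl⟩ ⟨hc0, Nat.le_of_dvd (by omega) hcM, .inl rfl⟩
  rw [hc] at hred
  rcases hred.2.2 with hpc | hpc
  · have hdouble := laverTab_two_mul_add hend hp hpM hc0 hpc hc0 hmin
    rw [hc] at hdouble
    exact laverTab_of_dvd (by omega) (hdouble.trans (two_mul M).symm)
      (by rw [← two_mul]; exact mul_dvd_mul_left 2 hcM) (by omega)
  · exact laverTab_of_dvd (by omega) (hpc.trans (two_mul M).symm)
      (hcM.trans (Dvd.intro_left 2 rfl)) (by omega)

theorem laverTab_two_mul_apply_self {p : ℕ} (hp : 1 ≤ p) (hp2M : p ≤ 2 * M) :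
    laverTab (2 * M) p (2 * M) = 2 * M := by
  rcases lt_trichotomy p M with hpM | rfl | hMp
  · exact laverTab_two_mul_apply_self_of_lt hend hp hpM
  · exact laverTab_of_dvd (by omega)
      ((laverTab_two_mul_self_left hend hp le_rfl).trans (two_mul p).symm)
      (Dvd.intro_left 2 rfl) (by omega)
  rcases hp2M.eq_or_lt with rfl | hp2M
  · exact laverTab_of_le le_rfl _
  · rw [laverTab_two_mul_of_lt hend hMp hp2M (q' := M) ⟨by omega, le_rfl, .inr (two_mul M)⟩,
      hend _ (by omega) (by omega), two_mul]

end Doubling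

theorem laverTab_two_pow_apply_self (n : ℕ) {p : ℕ} (hp : 1 ≤ p) (hpN : p ≤ 2 ^ n) :
    laverTab (2 ^ n) p (2 ^ n) = 2 ^ n := by
  induction n generalizing p with
  | zero => exact laverTab_of_le (by simpa using hp) _
  | succ n ih =>
    rw [pow_succ'] at hpN ⊢
    exact laverTab_two_mul_apply_self (fun p hp hpN => ih hp hpN) hp hpN

namespace IsLaverOp

variable {N : ℕ} {op : ℕ → ℕ → ℕ}

theorem op_succ (h : IsLaverOp N op) {p q : ℕ} (hp : 1 ≤ p) (hpN : p ≤ N) (hq : 1 ≤ q)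
    (hqN : q < N) : op p (q + 1) = op (op p q) (op p 1) := by
  rw [← h.2.1 q hq hqN, h.2.2.2 p q hp hpN hq hqN.le]

theorem top_op (h : IsLaverOp N op) {q : ℕ} (hq : 1 ≤ q) (hqN : q ≤ N) : op N q = q := by
  induction q, hq using Nat.le_induction with
  | base => exact h.2.2.1
  | succ q hq ih =>
    rw [h.op_succ (by omega) le_rfl hq (by omega), ih (by omega), h.2.2.1, h.2.1 q hq (by omega)]

theorem eq_laverTab (h : IsLaverOp N op) {p q : ℕ} (hp : 1 ≤ p) (hpN : p ≤ N) (hq : 1 ≤ q)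
    (hqN : q ≤ N) : op p q = laverTab N p q := by
  rcases hpN.eq_or_lt with rfl | hpN
  · rw [h.top_op hq hqN, laverTab_of_le le_rfl]
  rcases hq.eq_or_lt with rfl | hq
  · rw [h.2.1 p hp hpN, laverTab_one hpN]
  obtain ⟨q₀, hq₀⟩ : ∃ q₀, q = q₀ + 1 := ⟨q - 1, by omega⟩
  obtain ⟨hpu, huN⟩ := laverTab_mem_Ioc hpN q₀
  rw [hq₀, h.op_succ hp hpN.le (by omega) (by omega),
    eq_laverTab h hp hpN.le (by omega) (by omega), h.2.1 p hp hpN,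
    eq_laverTab h (by omega) huN (by omega) hpN, laverTab_succ hpN (by omega)]
termination_by (N - p, q)
decreasing_by all_goals (simp only [Prod.lex_def, true_and]; omega)

theorem self_distrib {n : ℕ} (h : IsLaverOp (2 ^ n) op) {p q r : ℕ} (hp : 1 ≤ p)
    (hpN : p ≤ 2 ^ n) (hq : 1 ≤ q) (hqN : q ≤ 2 ^ n) (hr : 1 ≤ r) (hrN : r ≤ 2 ^ n) :
    op p (op q r) = op (op p q) (op p r) := by
  obtain ⟨hpq, hpqN⟩ := h.1 p q hp hpN hq hqN
  obtain ⟨hpr, hprN⟩ := h.1 p r hp hpN hr hrN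
  obtain ⟨hqr, hqrN⟩ := h.1 q r hq hqN hr hrN
  rw [h.eq_laverTab hp hpN hqr hqrN, h.eq_laverTab hpq hpqN hpr hprN,
    h.eq_laverTab hq hqN hr hrN, h.eq_laverTab hp hpN hq hqN, h.eq_laverTab hp hpN hr hrN]
  exact laverTab_self_distrib (fun p => laverTab_two_pow_apply_self n) hp hpN hq hqN hr hrN

end IsLaverOp

/-- the one-term distributive chain complex of the `n`-th Laver table is
acyclic: `∂^▷_1 : C_1 → C_0 ≅ ℤ` is surjective and the kernel of each boundary map
equals the image of the next one; hence all homology groups are trivial. -/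
theorem laver_one_term_acyclic (n : ℕ) (op : ℕ → ℕ → ℕ) (h : IsLaverOp (2 ^ n) op)
    (act : LaverSet n → LaverSet n → LaverSet n)
    (hact : ∀ a b : LaverSet n, (act a b).val = op a.val b.val) :
    Function.Surjective (bdry act 0) ∧
    (∀ k, LinearMap.ker (bdry act k) = LinearMap.range (bdry act (k + 1))) := by
  refine bdry_zero_surjective_and_ker_eq_range act ⟨2 ^ n, Nat.one_le_two_pow, le_rfl⟩
    (fun y => Subtype.ext ?_) fun a b c => Subtype.ext ?_
  · rw [hact]
    exact h.top_op y.2.1 y.2.2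
  · simp only [hact]
    exact h.self_distrib a.2.1 a.2.2 b.2.1 b.2.2 c.2.1 c.2.2
end
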